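/- arXiv:0909.5216 — 8 statements merged into one kernel-verified Lean document; each statement's English description precedes it below -/
import Mathlib

section
/- Fix a ∈ (−1,1)∖{0}. Then J̃(a,·) is monotonically decreasing in the absolute value of its second argument on the range below |a|: for all b, b′ ∈ (−1,1) with 0 ≤ |b| ≤ |b′| ≤ |a|, one has J̃(a, b′) ≤ J̃(a, b), and the inequality is strict whenever 0 < |b| < |b′|. -/
/-!
In the variables `p = (1 - b²)⁻¹` and `q = (1 - a²)⁻¹` one has
`J̃(a, b) = log (q / p)² / (16 (q - p) (q - p + 1/2))`, and `p` grows with `|b|`.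
For `p < q` this is `1/16` times the square of the slope of the secant of `log` over `[p, q]`,
which strictly decreases in `p` because `log` is strictly concave, times `(q - p) / (q - p + 1/2)`,
which decreases in `p` as well. At `p = q` the expression is `0`.
-/

/-- The approximate crossover rate J̃(a,b) = A(a,b)/B(a,b). -/
noncomputable def Jt (a b : ℝ) : ℝ :=
  ((1 / 2) * Real.log ((1 - b ^ 2) / (1 - a ^ 2))) ^ 2 /
    (2 * (b ^ 4 + b ^ 2) / (1 - b ^ 2) ^ 2 + 2 * (a ^ 4 + a ^ 2) / (1 - a ^ 2) ^ 2
      - 4 * b ^ 2 * (a ^ 2 + 1) / ((1 - b ^ 2) * (1 - a ^ 2)))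

open Real Set

lemma log_div_div_sub_strictAntiOn (q : ℝ) :
    StrictAntiOn (fun p ↦ log (q / p) / (q - p)) (Ioo 0 q) := by
  intro p hp p' hp' hpp'
  have hq : q ∈ Ioi 0 := hp.1.trans hp.2
  have key := strictConcaveOn_log_Ioi.secant_strict_mono hq hp.1 hp'.1 hp.2.ne hp'.2.ne hpp'
  simp only
  rw [log_div (ne_of_gt hq) hp'.1.ne', log_div (ne_of_gt hq) hp.1.ne']
  convert key using 1 <;> rw [← neg_div_neg_eq] <;> ring_nf

lemma log_div_sq_div_strictAntiOn {c : ℝ} (hc : 0 ≤ c) (q : ℝ) :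
    StrictAntiOn (fun p ↦ log (q / p) ^ 2 / ((q - p) * (q - p + c))) (Ioc 0 q) := by
  intro p hp p' hp' hpp'
  have hqp : 0 < q - p := sub_pos.2 (hpp'.trans_le hp'.2)
  rcases hp'.2.eq_or_lt with rfl | hp'q
  · have hlog : 0 < log (p' / p) := log_pos ((one_lt_div hp.1).2 hpp')
    simp only [div_self hp'.1.ne', log_one, sub_self, zero_mul, div_zero]
    positivity
  have hqp' : 0 < q - p' := sub_pos.2 hp'q
  have split : ∀ x : ℝ, q - x ≠ 0 → log (q / x) ^ 2 / ((q - x) * (q - x + c)) =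
      (log (q / x) / (q - x)) ^ 2 * ((q - x) / (q - x + c)) := by
    intro x hx
    field_simp
  simp only
  rw [split p hqp.ne', split p' hqp'.ne']
  have hslope := log_div_div_sub_strictAntiOn q ⟨hp.1, hpp'.trans hp'q⟩ ⟨hp'.1, hp'q⟩ hpp'
  have hslope_pos : 0 < log (q / p') / (q - p') :=
    div_pos (log_pos ((one_lt_div hp'.1).2 hp'q)) hqp'
  have hfrac : (q - p') / (q - p' + c) ≤ (q - p) / (q - p + c) := by
    rw [div_le_div_iff₀ (by positivity) (by positivity)]
    nlinarith
  exact mul_lt_mul (pow_lt_pow_left₀ hslope hslope_pos.le two_ne_zero) hfrac (by positivity)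
    (by positivity)

lemma one_sub_sq_pos_of_abs_lt_one {x : ℝ} (hx : |x| < 1) : 0 < 1 - x ^ 2 := by
  rwa [sub_pos, sq_lt_one_iff_abs_lt_one]

lemma inv_one_sub_sq_le_inv_one_sub_sq {x y : ℝ} (hx : |x| < 1) (hy : |y| < 1) :
    (1 - x ^ 2)⁻¹ ≤ (1 - y ^ 2)⁻¹ ↔ |x| ≤ |y| := by
  rw [inv_le_inv₀ (one_sub_sq_pos_of_abs_lt_one hx) (one_sub_sq_pos_of_abs_lt_one hy),
    sub_le_sub_iff_left, sq_le_sq]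

lemma inv_one_sub_sq_lt_inv_one_sub_sq {x y : ℝ} (hx : |x| < 1) (hy : |y| < 1) :
    (1 - x ^ 2)⁻¹ < (1 - y ^ 2)⁻¹ ↔ |x| < |y| := by
  rw [inv_lt_inv₀ (one_sub_sq_pos_of_abs_lt_one hx) (one_sub_sq_pos_of_abs_lt_one hy),
    sub_lt_sub_iff_left, sq_lt_sq]

lemma Jt_eq {a b : ℝ} (ha : |a| < 1) (hb : |b| < 1) :
    Jt a b = log ((1 - a ^ 2)⁻¹ / (1 - b ^ 2)⁻¹) ^ 2 /
      (((1 - a ^ 2)⁻¹ - (1 - b ^ 2)⁻¹) * ((1 - a ^ 2)⁻¹ - (1 - b ^ 2)⁻¹ + 1 / 2)) / 16 := by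
  have ha2 := (one_sub_sq_pos_of_abs_lt_one ha).ne'
  have hb2 := (one_sub_sq_pos_of_abs_lt_one hb).ne'
  have hden : 2 * (b ^ 4 + b ^ 2) / (1 - b ^ 2) ^ 2 + 2 * (a ^ 4 + a ^ 2) / (1 - a ^ 2) ^ 2
      - 4 * b ^ 2 * (a ^ 2 + 1) / ((1 - b ^ 2) * (1 - a ^ 2)) =
      4 * (((1 - a ^ 2)⁻¹ - (1 - b ^ 2)⁻¹) * ((1 - a ^ 2)⁻¹ - (1 - b ^ 2)⁻¹ + 1 / 2)) := by
    field_simp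
    ring
  rw [Jt, hden, inv_div_inv, mul_comm 4, ← div_div]
  ring

theorem Jt_decreasing_second_general (a : ℝ) (ha : a ∈ Set.Ioo (-1 : ℝ) 1)
    (b b' : ℝ) (hb : b ∈ Set.Ioo (-1 : ℝ) 1) (hb' : b' ∈ Set.Ioo (-1 : ℝ) 1)
    (h1 : |b| ≤ |b'|) (h2 : |b'| ≤ |a|) :
    Jt a b' ≤ Jt a b ∧ (0 < |b| → |b| < |b'| → Jt a b' < Jt a b) := by
  replace ha := abs_lt.2 ha
  replace hb := abs_lt.2 hb
  replace hb' := abs_lt.2 hb'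
  have hmem {x : ℝ} (hx : |x| < 1) (hxa : |x| ≤ |a|) : (1 - x ^ 2)⁻¹ ∈ Ioc 0 (1 - a ^ 2)⁻¹ :=
    ⟨inv_pos.2 (one_sub_sq_pos_of_abs_lt_one hx), (inv_one_sub_sq_le_inv_one_sub_sq hx ha).2 hxa⟩
  have hanti := log_div_sq_div_strictAntiOn (c := 1 / 2) (by norm_num) (1 - a ^ 2)⁻¹
  rw [Jt_eq ha hb, Jt_eq ha hb']
  refine ⟨?_, fun _ hlt ↦ ?_⟩
  · apply div_le_div_of_nonneg_right _ (by norm_num)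
    exact hanti.antitoneOn (hmem hb (h1.trans h2)) (hmem hb' h2)
      ((inv_one_sub_sq_le_inv_one_sub_sq hb hb').2 h1)
  · apply div_lt_div_of_pos_right _ (by norm_num)
    exact hanti (hmem hb (h1.trans h2)) (hmem hb' h2)
      ((inv_one_sub_sq_lt_inv_one_sub_sq hb hb').2 hlt)

/-- For fixed a ∈ (−1,1)∖{0}, J̃(a,·) is monotonically decreasing in the absolute value of
its second argument on the range below |a|, strictly so when 0 < |b| < |b′|. -/
theorem Jt_decreasing_second (a : ℝ) (ha : a ∈ Set.Ioo (-1 : ℝ) 1) (ha0 : a ≠ 0)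
    (b b' : ℝ) (hb : b ∈ Set.Ioo (-1 : ℝ) 1) (hb' : b' ∈ Set.Ioo (-1 : ℝ) 1)
    (h1 : |b| ≤ |b'|) (h2 : |b'| ≤ |a|) :
    Jt a b' ≤ Jt a b ∧ (0 < |b| → |b| < |b'| → Jt a b' < Jt a b) :=
  Jt_decreasing_second_general a ha b b' hb hb' h1 h2
end

section
/- For all real numbers x and y with 0 < x < y < 1, the polynomial C₃(x,y) := 3y³x − 19y²x − 3y − 2y² + 5y³ − 3y²x² + 14x²y + 3x + 8xy − 6x² is strictly negative, and C₃(x,x) = 0 for all x. -/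
/-!
C₃(x,y) factors as (y − x)·Q(x,y) with Q(x,y) = 3xy² + 5y² − 14xy − 2y + 6x − 3. Since Q is affine
in x, on 0 < x < y it is a convex combination of Q(0,y) = (5y + 3)(y − 1) and
Q(y,y) = 3y³ − 9y² + 4y − 3 ≤ −6y² + 4y − 3, both negative for 0 < y < 1.
-/

def C3 (x y : ℝ) : ℝ :=
  3 * y ^ 3 * x - 19 * y ^ 2 * x - 3 * y - 2 * y ^ 2 + 5 * y ^ 3 - 3 * y ^ 2 * x ^ 2
    + 14 * x ^ 2 * y + 3 * x + 8 * x * y - 6 * x ^ 2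

def C3Cofactor (x y : ℝ) : ℝ :=
  3 * x * y ^ 2 + 5 * y ^ 2 - 14 * x * y - 2 * y + 6 * x - 3

theorem C3_eq_sub_mul_cofactor (x y : ℝ) : C3 x y = (y - x) * C3Cofactor x y := by
  unfold C3 C3Cofactor; ring

theorem C3_self (x : ℝ) : C3 x x = 0 := by
  simp [C3_eq_sub_mul_cofactor]

theorem mul_C3Cofactor_eq (x y : ℝ) :
    y * C3Cofactor x y = (y - x) * C3Cofactor 0 y + x * C3Cofactor y y := by
  unfold C3Cofactor; ring

theorem C3Cofactor_zero_left_neg {y : ℝ} (hy₀ : 0 ≤ y) (hy₁ : y < 1) : C3Cofactor 0 y < 0 := by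
  have h : C3Cofactor 0 y = (5 * y + 3) * (y - 1) := by unfold C3Cofactor; ring
  rw [h]
  exact mul_neg_of_pos_of_neg (by linarith) (by linarith)

theorem C3Cofactor_self_neg {y : ℝ} (hy₀ : 0 ≤ y) (hy₁ : y ≤ 1) : C3Cofactor y y < 0 := by
  have hcube : y ^ 3 ≤ y ^ 2 := pow_le_pow_of_le_one hy₀ hy₁ (by norm_num)
  calc C3Cofactor y y = 3 * y ^ 3 - 9 * y ^ 2 + 4 * y - 3 := by unfold C3Cofactor; ring
    _ ≤ -6 * y ^ 2 + 4 * y - 3 := by linarith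
    _ = -6 * (y - 1 / 3) ^ 2 - 7 / 3 := by ring
    _ < 0 := by nlinarith [sq_nonneg (y - 1 / 3)]

theorem C3Cofactor_neg {x y : ℝ} (hx : 0 < x) (hxy : x < y) (hy : y < 1) :
    C3Cofactor x y < 0 := by
  have hy₀ : 0 < y := hx.trans hxy
  have hmul : y * C3Cofactor x y < 0 := by
    rw [mul_C3Cofactor_eq]
    have h₀ := mul_neg_of_pos_of_neg (sub_pos.2 hxy) (C3Cofactor_zero_left_neg hy₀.le hy)
    have h₁ := mul_neg_of_pos_of_neg hx (C3Cofactor_self_neg hy₀.le hy.le)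
    linarith
  exact neg_of_mul_neg_right hmul hy₀.le

theorem C3_neg_of_lt {x y : ℝ} (hx : 0 < x) (hxy : x < y) (hy : y < 1) : C3 x y < 0 := by
  rw [C3_eq_sub_mul_cofactor]
  exact mul_neg_of_pos_of_neg (sub_pos.2 hxy) (C3Cofactor_neg hx hxy hy)

/-- The polynomial C₃(x,y) = 3y³x − 19y²x − 3y − 2y² + 5y³ − 3y²x² + 14x²y + 3x + 8xy − 6x²
is strictly negative for 0 < x < y < 1, and vanishes on the diagonal. -/
theorem C3_neg :
    (∀ x y : ℝ, 0 < x → x < y → y < 1 →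
      3 * y ^ 3 * x - 19 * y ^ 2 * x - 3 * y - 2 * y ^ 2 + 5 * y ^ 3 - 3 * y ^ 2 * x ^ 2
        + 14 * x ^ 2 * y + 3 * x + 8 * x * y - 6 * x ^ 2 < 0) ∧
    (∀ x : ℝ,
      3 * x ^ 3 * x - 19 * x ^ 2 * x - 3 * x - 2 * x ^ 2 + 5 * x ^ 3 - 3 * x ^ 2 * x ^ 2
        + 14 * x ^ 2 * x + 3 * x + 8 * x * x - 6 * x ^ 2 = 0) :=
  ⟨fun _ _ hx hxy hy => C3_neg_of_lt hx hxy hy, C3_self⟩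
end

section
/- For all a, b ∈ (−1,1) with 0 ≤ |b| < |a| < 1, the denominator B(a,b) is strictly positive and the approximate crossover rate is strictly positive: J̃(a,b) > 0. -/
/-!
In the variables `s = 1/(1 - a²)` and `t = 1/(1 - b²)` the denominator factors as
`B(a,b) = 2 (s - t) (2 (s - t) + 1)`. For `|b| < |a| < 1` we have `s > t > 0`, so `B > 0`;
the numerator is the square of `½ log((1 - b²)/(1 - a²)) > 0`.
-/

namespace Crossover

variable {a b : ℝ}

theorem denom_eq (ha : 1 - a ^ 2 ≠ 0) (hb : 1 - b ^ 2 ≠ 0) :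
    2 * (b ^ 4 + b ^ 2) / (1 - b ^ 2) ^ 2 + 2 * (a ^ 4 + a ^ 2) / (1 - a ^ 2) ^ 2
        - 4 * b ^ 2 * (a ^ 2 + 1) / ((1 - b ^ 2) * (1 - a ^ 2)) =
      2 * ((1 - a ^ 2)⁻¹ - (1 - b ^ 2)⁻¹) * (2 * ((1 - a ^ 2)⁻¹ - (1 - b ^ 2)⁻¹) + 1) := by
  field_simp
  ring

theorem one_sub_sq_pos_of_abs_lt_one (ha : |a| < 1) : 0 < 1 - a ^ 2 :=
  sub_pos.mpr (sq_lt_one_iff_abs_lt_one a |>.mpr ha)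

theorem one_sub_sq_lt_of_abs_lt (hba : |b| < |a|) : 1 - a ^ 2 < 1 - b ^ 2 :=
  sub_lt_sub_left (sq_lt_sq.mpr hba) 1

theorem denom_pos (hba : |b| < |a|) (ha : |a| < 1) :
    0 < 2 * (b ^ 4 + b ^ 2) / (1 - b ^ 2) ^ 2 + 2 * (a ^ 4 + a ^ 2) / (1 - a ^ 2) ^ 2
        - 4 * b ^ 2 * (a ^ 2 + 1) / ((1 - b ^ 2) * (1 - a ^ 2)) := by
  have hua := one_sub_sq_pos_of_abs_lt_one ha
  have hub := one_sub_sq_pos_of_abs_lt_one (hba.trans ha)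
  have hst : 0 < (1 - a ^ 2)⁻¹ - (1 - b ^ 2)⁻¹ :=
    sub_pos.mpr (inv_strictAnti₀ hua (one_sub_sq_lt_of_abs_lt hba))
  rw [denom_eq hua.ne' hub.ne']
  positivity

theorem log_ratio_pos (hba : |b| < |a|) (ha : |a| < 1) :
    0 < Real.log ((1 - b ^ 2) / (1 - a ^ 2)) :=
  Real.log_pos <| (one_lt_div (one_sub_sq_pos_of_abs_lt_one ha)).mpr
    (one_sub_sq_lt_of_abs_lt hba)

end Crossover

/-- For 0 ≤ |b| < |a| < 1, the denominator B(a,b) is strictly positive and J̃(a,b) > 0. -/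
theorem Jt_pos (a b : ℝ) (hba : |b| < |a|) (ha : |a| < 1) :
    0 < 2 * (b ^ 4 + b ^ 2) / (1 - b ^ 2) ^ 2 + 2 * (a ^ 4 + a ^ 2) / (1 - a ^ 2) ^ 2
        - 4 * b ^ 2 * (a ^ 2 + 1) / ((1 - b ^ 2) * (1 - a ^ 2)) ∧
    0 < Jt a b := by
  have hB := Crossover.denom_pos hba ha
  have hlog := Crossover.log_ratio_pos hba ha
  exact ⟨hB, by unfold Jt; positivity⟩
end

section
/- Let T = (V,E) be a tree on d ≥ 3 vertices with edge correlations ρ : E → (−1,1)∖{0}. Then the approximate error exponent equals the minimum of the edge weights over pairs of adjacent edges: K̃(T,ρ) = min over unordered pairs {f,g} of distinct adjacent edges of T of W(ρ_f, ρ_g). -/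
noncomputable def W (a b : ℝ) : ℝ := min (Jt a (a * b)) (Jt b (a * b))

/-- The approximate error exponent K̃(G,ρ): the infimum of J̃(ρ_e, ρ_{e′}) over all
non-edges e′ = {u,v} and all edges e on the (unique) path joining u and v, where the
correlation of the non-edge is the product of the edge correlations along that path. -/
noncomputable def Ktilde {V : Type*} (G : SimpleGraph V) (ρ : Sym2 V → ℝ) : ℝ :=
  sInf { x : ℝ | ∃ (u v : V) (p : G.Walk u v), p.IsPath ∧ u ≠ v ∧ ¬ G.Adj u v ∧
    ∃ e ∈ p.edges, x = Jt (ρ e) ((p.edges.map ρ).prod) }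

/-!
In the odds coordinates `q = a² / (1 - a²)`, `p = b² / (1 - b²)` the rate `J̃(a, b)` becomes
`(log (1 + q) - log (1 + p))² / (4 (4 (q - p)² + 2 (q - p)))`, which decreases in `p` on
`(-1, q)` (the sign of the derivative comes down to `log x ≤ x - 1`). So `J̃(a, ·)` decreases
in `b²` below `a²`.

If `e` lies on the path of a non-edge, some edge `e'` of that path is adjacent to `e`, and
`ρ_{e'}` of the non-edge is `ρ_e ρ_{e'} m` with `|m| ≤ 1`; hence the term `J̃(ρ_e, ·)` of `K̃`
is at least `J̃(ρ_e, ρ_e ρ_{e'}) ≥ W(ρ_e, ρ_{e'})`. Conversely two adjacent edges of a tree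
form the path of a non-edge (a tree has no triangles), and on that path one of the two terms
of `K̃` equals `W`.
-/

open Real

noncomputable def oddsRate (q p : ℝ) : ℝ :=
  (log (1 + q) - log (1 + p)) ^ 2 / (4 * (q - p) ^ 2 + 2 * (q - p))

lemma hasDerivAt_oddsRate {q p : ℝ} (hp : -1 < p) (hpq : p < q) :
    HasDerivAt (oddsRate q)
      ((log (1 + q) - log (1 + p)) *
          ((log (1 + q) - log (1 + p)) * (1 + p) * (8 * (q - p) + 2)
            - 2 * (4 * (q - p) ^ 2 + 2 * (q - p))) /
        ((1 + p) * (4 * (q - p) ^ 2 + 2 * (q - p)) ^ 2)) p := by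
  have h1p : 1 + p ≠ 0 := by linarith
  have hw : 4 * (q - p) ^ 2 + 2 * (q - p) ≠ 0 := by nlinarith
  have hlog : HasDerivAt (fun x => log (1 + x)) (1 / (1 + p)) p := by
    simpa using ((hasDerivAt_id p).const_add 1).log h1p
  have hsub : HasDerivAt (fun x => q - x) (-1) p := by
    simpa using (hasDerivAt_id p).const_sub q
  refine ((((hasDerivAt_const p (log (1 + q))).sub hlog).pow 2).div
    (((hsub.pow 2).const_mul 4).add (hsub.const_mul 2)) hw).congr_deriv ?_
  simp only [Pi.sub_apply, Pi.pow_apply, Pi.add_apply]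
  field_simp
  ring

lemma oddsRate_strictAntiOn (q : ℝ) : StrictAntiOn (oddsRate q) (Set.Ioo (-1) q) := by
  refine strictAntiOn_of_deriv_neg (convex_Ioo _ _) ?_ ?_
  · intro p ⟨hp, hpq⟩
    exact (hasDerivAt_oddsRate hp hpq).continuousAt.continuousWithinAt
  · intro p hp
    rw [interior_Ioo] at hp
    obtain ⟨hp, hpq⟩ := hp
    rw [(hasDerivAt_oddsRate hp hpq).deriv]
    have h1p : 0 < 1 + p := by linarith
    have ht : 0 < q - p := by linarith
    set L := log (1 + q) - log (1 + p)
    have hL : 0 < L := sub_pos.2 (log_lt_log h1p (by linarith))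
    have hLt : L * (1 + p) ≤ q - p := by
      have := log_le_sub_one_of_pos (div_pos (by linarith : 0 < 1 + q) h1p)
      rw [log_div (by linarith) h1p.ne', div_sub_one h1p.ne', le_div_iff₀ h1p] at this
      linarith
    refine div_neg_of_neg_of_pos (mul_neg_of_pos_of_neg hL ?_) (by positivity)
    nlinarith

lemma Jt_eq_oddsRate {a b : ℝ} (ha : a ^ 2 < 1) (hb : b ^ 2 < 1) :
    Jt a b = oddsRate (a ^ 2 / (1 - a ^ 2)) (b ^ 2 / (1 - b ^ 2)) / 4 := by
  have ha' : 1 - a ^ 2 ≠ 0 := by linarith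
  have hb' : 1 - b ^ 2 ≠ 0 := by linarith
  have hodds : ∀ {x : ℝ}, 1 - x ≠ 0 → 1 + x / (1 - x) = (1 - x)⁻¹ := fun hx => by
    field_simp; ring
  rw [Jt, oddsRate, hodds ha', hodds hb', log_inv, log_inv, log_div hb' ha']
  field_simp
  ring

lemma div_one_sub_le_div_one_sub {x y : ℝ} (hxy : x ≤ y) (hy : y < 1) :
    x / (1 - x) ≤ y / (1 - y) := by
  rw [div_le_div_iff₀ (by linarith) (by linarith)]
  nlinarith

lemma div_one_sub_lt_div_one_sub {x y : ℝ} (hxy : x < y) (hy : y < 1) :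
    x / (1 - x) < y / (1 - y) := by
  rw [div_lt_div_iff₀ (by linarith) (by linarith)]
  nlinarith

lemma Jt_le_Jt_of_sq_le {a b c : ℝ} (ha : a ^ 2 < 1) (hbc : b ^ 2 ≤ c ^ 2) (hca : c ^ 2 < a ^ 2) :
    Jt a c ≤ Jt a b := by
  have hc : c ^ 2 < 1 := hca.trans ha
  have hb : b ^ 2 < 1 := hbc.trans_lt hc
  have hb0 : -1 < b ^ 2 / (1 - b ^ 2) := by
    have : 0 ≤ b ^ 2 / (1 - b ^ 2) := div_nonneg (sq_nonneg b) (by linarith)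
    linarith
  have hcq := div_one_sub_lt_div_one_sub hca ha
  have hbc' := div_one_sub_le_div_one_sub hbc hc
  rw [Jt_eq_oddsRate ha hc, Jt_eq_oddsRate ha hb]
  gcongr
  exact (oddsRate_strictAntiOn _).antitoneOn ⟨hb0, hbc'.trans_lt hcq⟩ ⟨hb0.trans_le hbc', hcq⟩ hbc'

lemma W_le_Jt_mul {a b m : ℝ} (ha : a ^ 2 < 1) (ha0 : a ≠ 0) (hb : b ^ 2 < 1) (hm : |m| ≤ 1) :
    W a b ≤ Jt a (a * b * m) := by
  have hm2 : m ^ 2 ≤ 1 := by rwa [sq_le_one_iff_abs_le_one]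
  have hab : (a * b) ^ 2 < a ^ 2 := by
    rw [mul_pow]; exact mul_lt_of_lt_one_right (by positivity) hb
  have habm : (a * b * m) ^ 2 ≤ (a * b) ^ 2 := by
    rw [mul_pow (a * b)]; exact mul_le_of_le_one_right (sq_nonneg _) hm2
  exact (min_le_left _ _).trans (Jt_le_Jt_of_sq_le ha habm hab)

namespace SimpleGraph

variable {V : Type*} {G : SimpleGraph V}

lemma IsAcyclic.not_adj_of_adj_of_adj (hG : G.IsAcyclic) {u v w : V} (huv : G.Adj u v)
    (hvw : G.Adj v w) (huw : u ≠ w) : ¬ G.Adj u w := fun hwu =>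
  hG (.cons hwu.symm (.cons huv (.cons hvw .nil))) <| by
    simp [Walk.cons_isCycle_iff, huv.ne, hvw.ne, hvw.ne', huw, huw.symm]

lemma IsAcyclic.exists_isPath_edges_eq_pair (hG : G.IsAcyclic) {f g : Sym2 V}
    (hf : f ∈ G.edgeSet) (hg : g ∈ G.edgeSet) (hfg : f ≠ g) {x : V} (hxf : x ∈ f) (hxg : x ∈ g) :
    ∃ (u w : V) (p : G.Walk u w), p.IsPath ∧ u ≠ w ∧ ¬ G.Adj u w ∧ p.edges = [f, g] := by
  obtain ⟨u, rfl⟩ := Sym2.mem_iff_exists.mp hxf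
  obtain ⟨w, rfl⟩ := Sym2.mem_iff_exists.mp hxg
  have hxu : G.Adj x u := hf
  have hxw : G.Adj x w := hg
  have huw : u ≠ w := by rintro rfl; exact hfg rfl
  refine ⟨u, w, .cons hxu.symm (.cons hxw .nil), ?_, huw,
    hG.not_adj_of_adj_of_adj hxu.symm hxw huw, by simp [Sym2.eq_swap]⟩
  simp [Walk.cons_isPath_iff, hxu.ne', hxw.ne, huw]

lemma Walk.exists_perm_cons_cons_of_mem_edges {u v : V} (p : G.Walk u v) (hp : 2 ≤ p.length)
    {e : Sym2 V} (he : e ∈ p.edges) :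
    ∃ (e' : Sym2 V) (l : List (Sym2 V)), (∃ x, x ∈ e ∧ x ∈ e') ∧ p.edges.Perm (e :: e' :: l) := by
  induction p with
  | nil => simp at hp
  | @cons u w v h q ih =>
    cases q with
    | nil => simp at hp
    | @cons w x v h' r =>
      simp only [Walk.edges_cons, List.mem_cons] at he ⊢
      rcases he with rfl | rfl | her
      · exact ⟨s(w, x), r.edges, ⟨w, by simp, by simp⟩, .refl _⟩
      · exact ⟨s(u, w), r.edges, ⟨w, by simp, by simp⟩, .swap _ _ _⟩
      · have hr : 1 ≤ r.length := by
          rw [← r.length_edges]; exact List.length_pos_of_mem her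
        obtain ⟨e', l, hadj, hperm⟩ := ih (by simp; omega) (by simp [her])
        rw [Walk.edges_cons] at hperm
        exact ⟨e', s(u, w) :: l, hadj, (hperm.cons _).trans (List.perm_middle (l₁ := [e, e'])).symm⟩

lemma Walk.IsTrail.exists_adjacent_W_le_Jt {u v : V} {p : G.Walk u v} (hp : p.IsTrail)
    (hlen : 2 ≤ p.length) {ρ : Sym2 V → ℝ} (hρ : ∀ e ∈ G.edgeSet, ρ e ^ 2 < 1 ∧ ρ e ≠ 0)
    {e : Sym2 V} (he : e ∈ p.edges) :
    ∃ e' ∈ p.edges, e ≠ e' ∧ (∃ x, x ∈ e ∧ x ∈ e') ∧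
      W (ρ e) (ρ e') ≤ Jt (ρ e) ((p.edges.map ρ).prod) := by
  obtain ⟨e', l, hadj, hperm⟩ := p.exists_perm_cons_cons_of_mem_edges hlen he
  have hsub : ∀ f ∈ e :: e' :: l, f ∈ G.edgeSet := fun f hf =>
    p.edges_subset_edgeSet (hperm.symm.subset hf)
  have hnodup : (e :: e' :: l).Nodup := hperm.nodup_iff.1 hp.edges_nodup
  have hl : |(l.map ρ).prod| ≤ 1 := by
    refine List.prod_induction (|·| ≤ 1)
      (fun a b ha hb => (abs_mul a b).trans_le (mul_le_one₀ ha (abs_nonneg b) hb)) (by simp) ?_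
    simp only [List.mem_map]
    rintro _ ⟨f, hf, rfl⟩
    exact (sq_le_one_iff_abs_le_one _).1 (hρ f (hsub f (by simp [hf]))).1.le
  refine ⟨e', hperm.symm.subset (by simp), fun h => by simp [h] at hnodup, hadj, ?_⟩
  rw [(hperm.map ρ).prod_eq, List.map_cons, List.map_cons, List.prod_cons, List.prod_cons,
    ← mul_assoc]
  exact W_le_Jt_mul (hρ e (hsub e (by simp))).1 (hρ e (hsub e (by simp))).2
    (hρ e' (hsub e' (by simp))).1 hl

lemma Walk.two_le_length {u v : V} (p : G.Walk u v) (huv : u ≠ v)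
    (hnadj : ¬ G.Adj u v) : 2 ≤ p.length := by
  by_contra! h
  interval_cases hp : p.length
  · exact huv (Walk.eq_of_length_eq_zero hp)
  · exact hnadj (Walk.adj_of_length_eq_one hp)

end SimpleGraph

theorem Ktilde_eq_min_adjacent_general {V : Type*}
    (G : SimpleGraph V) (hG : G.IsTree) (ρ : Sym2 V → ℝ)
    (hρ : ∀ e ∈ G.edgeSet, ρ e ∈ Set.Ioo (-1 : ℝ) 1 ∧ ρ e ≠ 0) :
    Ktilde G ρ = sInf { x : ℝ | ∃ f g : Sym2 V, f ∈ G.edgeSet ∧ g ∈ G.edgeSet ∧ f ≠ g ∧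
      (∃ v : V, v ∈ f ∧ v ∈ g) ∧ x = W (ρ f) (ρ g) } := by
  have hρ' : ∀ e ∈ G.edgeSet, ρ e ^ 2 < 1 ∧ ρ e ≠ 0 := fun e he =>
    ⟨(sq_lt_one_iff_abs_lt_one _).2 (abs_lt.2 (hρ e he).1), (hρ e he).2⟩
  refine csInf_eq_csInf_of_forall_exists_le ?_ ?_
  · rintro _ ⟨u, v, p, hp, huv, hnadj, e, he, rfl⟩
    obtain ⟨e', he', hne, hadj, hle⟩ :=
      hp.isTrail.exists_adjacent_W_le_Jt (p.two_le_length huv hnadj) hρ' he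
    exact ⟨_, ⟨e, e', p.edges_subset_edgeSet he, p.edges_subset_edgeSet he', hne, hadj, rfl⟩, hle⟩
  · rintro _ ⟨f, g, hf, hg, hfg, ⟨x, hxf, hxg⟩, rfl⟩
    obtain ⟨u, w, p, hp, huw, hnadj, hedges⟩ :=
      hG.isAcyclic.exists_isPath_edges_eq_pair hf hg hfg hxf hxg
    refine ⟨_, ⟨u, w, p, hp, huw, hnadj, ?_⟩, le_rfl⟩
    simp only [hedges, List.mem_cons, List.not_mem_nil, or_false, exists_eq_or_imp,
      exists_eq_left, List.map_cons, List.map_nil, List.prod_cons, List.prod_nil, mul_one]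
    exact min_choice _ _

/-- For a tree on at least 3 vertices, the approximate error exponent equals the minimum of
the edge weights W over all unordered pairs of distinct adjacent edges. -/
theorem Ktilde_eq_min_adjacent {V : Type*} [Fintype V] (hd : 3 ≤ Fintype.card V)
    (G : SimpleGraph V) (hG : G.IsTree) (ρ : Sym2 V → ℝ)
    (hρ : ∀ e ∈ G.edgeSet, ρ e ∈ Set.Ioo (-1 : ℝ) 1 ∧ ρ e ≠ 0) :
    Ktilde G ρ = sInf { x : ℝ | ∃ f g : Sym2 V, f ∈ G.edgeSet ∧ g ∈ G.edgeSet ∧ f ≠ g ∧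
      (∃ v : V, v ∈ f ∧ v ∈ g) ∧ x = W (ρ f) (ρ g) } :=
  Ktilde_eq_min_adjacent_general G hG ρ hρ
end

section
/- Let T = (V,E) be a tree on d ≥ 3 vertices with edge correlations ρ : E → (−1,1)∖{0}. For each edge e ∈ E define ρ_e* := max{|ρ_f| : f ∈ E, f ≠ e, f adjacent to e}. Then the approximate error exponent can be computed by a minimization over the d−1 edges alone: K̃(T,ρ) = min over e ∈ E of J̃(ρ_e, ρ_e·ρ_e*). -/
/-!
Write `x = ρ_{e'}²`, `y = ρ_e²` and `t = (1 - x) / (1 - y) > 1`. Then `J̃(ρ_e, ρ_{e'})` equals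
`(1 - y)² / 8` times the product of `t log t / (t - 1)` and `t log t / ((3 - y) t - 2)`, two
nonnegative increasing functions of `t`; so for fixed `ρ_e` it decreases as `|ρ_{e'}|` grows.
On a path through `e`, `|ρ_{e'}|` is at most `|ρ_e| |ρ_f|` for a neighbour `f` of `e` on the
path, hence at most `|ρ_e| ρ_e*`, and this bound is attained by the two-edge path through
`e` and its neighbour of largest correlation, which joins two non-adjacent vertices since a
tree has no triangles.
-/

open Real Set SimpleGraph

lemma Jt_congr_right {a b b' : ℝ} (h : b ^ 2 = b' ^ 2) : Jt a b = Jt a b' := by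
  simp only [Jt, show b ^ 4 = (b ^ 2) ^ 2 by ring, show b' ^ 4 = (b' ^ 2) ^ 2 by ring, h]

noncomputable def mulLogDiv (c k t : ℝ) : ℝ := t * log t / (c * t - k)

lemma hasDerivAt_mulLogDiv {c k t : ℝ} (ht : 0 < t) (hden : c * t - k ≠ 0) :
    HasDerivAt (mulLogDiv c k) ((c * t - k - k * log t) / (c * t - k) ^ 2) t := by
  have hnum : HasDerivAt (fun t => t * log t) (log t + 1) t := by
    simpa [ht.ne'] using (hasDerivAt_id t).fun_mul (hasDerivAt_log ht.ne')
  have hlin : HasDerivAt (fun t => c * t - k) c t := by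
    simpa using ((hasDerivAt_id t).const_mul c).sub_const k
  exact (hnum.fun_div hlin hden).congr_deriv (by ring)

lemma mulLogDiv_nonneg {c k t : ℝ} (hk : 0 < k) (hkc : k ≤ c) (ht : 1 < t) :
    0 ≤ mulLogDiv c k t := by
  have : 0 < c * t - k := by nlinarith
  have := log_nonneg ht.le
  unfold mulLogDiv
  positivity

lemma monotoneOn_mulLogDiv {c k : ℝ} (hk : 0 < k) (hkc : k ≤ c) :
    MonotoneOn (mulLogDiv c k) (Ioi 1) := by
  have hderiv {t : ℝ} (ht : t ∈ Ioi 1) :=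
    hasDerivAt_mulLogDiv (c := c) (k := k) (zero_lt_one.trans ht) (by nlinarith [mem_Ioi.mp ht])
  refine monotoneOn_of_hasDerivWithinAt_nonneg (convex_Ioi 1)
    (fun t ht => (hderiv ht).continuousAt.continuousWithinAt)
    (fun t ht => (hderiv (interior_subset ht)).hasDerivWithinAt) fun t ht => ?_
  rw [interior_Ioi, mem_Ioi] at ht
  have hlog : k * log t ≤ k * (t - 1) :=
    mul_le_mul_of_nonneg_left (log_le_sub_one_of_pos (zero_lt_one.trans ht)) hk.le
  have : 0 ≤ c * t - k - k * log t := by nlinarith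
  positivity

lemma Jt_eq_mul {a b : ℝ} (ha : a ^ 2 < 1) (hb : b ^ 2 < a ^ 2) :
    Jt a b = (1 - a ^ 2) ^ 2 / 8 *
      (mulLogDiv 1 1 ((1 - b ^ 2) / (1 - a ^ 2)) *
        mulLogDiv (3 - a ^ 2) 2 ((1 - b ^ 2) / (1 - a ^ 2))) := by
  have hy : 0 < 1 - a ^ 2 := by linarith
  have hx : 0 < 1 - b ^ 2 := by linarith
  have hyx : 0 < a ^ 2 - b ^ 2 := by linarith
  have hM : 0 < 1 + a ^ 2 - 3 * b ^ 2 + b ^ 2 * a ^ 2 := by nlinarith [sq_nonneg b]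
  have hden : 2 * (b ^ 4 + b ^ 2) / (1 - b ^ 2) ^ 2 + 2 * (a ^ 4 + a ^ 2) / (1 - a ^ 2) ^ 2
        - 4 * b ^ 2 * (a ^ 2 + 1) / ((1 - b ^ 2) * (1 - a ^ 2))
      = 2 * (a ^ 2 - b ^ 2) * (1 + a ^ 2 - 3 * b ^ 2 + b ^ 2 * a ^ 2) /
        ((1 - b ^ 2) ^ 2 * (1 - a ^ 2) ^ 2) := by
    field_simp
    ring
  have hden₁ : 1 * ((1 - b ^ 2) / (1 - a ^ 2)) - 1 = (a ^ 2 - b ^ 2) / (1 - a ^ 2) := by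
    field_simp
    ring
  have hden₂ : (3 - a ^ 2) * ((1 - b ^ 2) / (1 - a ^ 2)) - 2 =
      (1 + a ^ 2 - 3 * b ^ 2 + b ^ 2 * a ^ 2) / (1 - a ^ 2) := by
    field_simp
    ring
  rw [Jt, hden, mulLogDiv, mulLogDiv, hden₁, hden₂]
  field_simp
  ring

lemma Jt_le_Jt_of_sq_le_s8 {a b b' : ℝ} (ha : a ^ 2 < 1) (hb : b ^ 2 < a ^ 2)
    (hb' : b' ^ 2 ≤ b ^ 2) : Jt a b ≤ Jt a b' := by
  have hy : 0 < 1 - a ^ 2 := by linarith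
  have ht : 1 < (1 - b ^ 2) / (1 - a ^ 2) := by rw [one_lt_div hy]; linarith
  have ht' : 1 < (1 - b' ^ 2) / (1 - a ^ 2) := by rw [one_lt_div hy]; linarith
  have htt' : (1 - b ^ 2) / (1 - a ^ 2) ≤ (1 - b' ^ 2) / (1 - a ^ 2) := by gcongr
  have hc : 2 ≤ 3 - a ^ 2 := by linarith
  rw [Jt_eq_mul ha hb, Jt_eq_mul ha (hb'.trans_lt hb)]
  gcongr ?_ * ?_
  exact mul_le_mul (monotoneOn_mulLogDiv one_pos le_rfl ht ht' htt')
    (monotoneOn_mulLogDiv two_pos hc ht ht' htt') (mulLogDiv_nonneg two_pos hc ht)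
    (mulLogDiv_nonneg one_pos le_rfl ht')

lemma Finset.abs_prod_le_abs_prod_of_subset {ι R : Type*} [CommRing R] [LinearOrder R]
    [IsStrictOrderedRing R] [DecidableEq ι] {s t : Finset ι} (f : ι → R) (hts : t ⊆ s)
    (hf : ∀ i ∈ s, |f i| ≤ 1) : |∏ i ∈ s, f i| ≤ |∏ i ∈ t, f i| := by
  rw [← Finset.prod_sdiff hts, abs_mul]
  refine mul_le_of_le_one_left (abs_nonneg _) ?_
  rw [Finset.abs_prod]
  exact Finset.prod_le_one (fun i _ => abs_nonneg _) fun i hi => hf i (Finset.sdiff_subset hi)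

lemma List.Nodup.abs_prod_map_le {α R : Type*} [CommRing R] [LinearOrder R]
    [IsStrictOrderedRing R] {l : List α} (hl : l.Nodup) (ρ : α → R)
    (hρ : ∀ g ∈ l, |ρ g| ≤ 1) {e f : α} (he : e ∈ l) (hf : f ∈ l) (hfe : f ≠ e) :
    |(l.map ρ).prod| ≤ |ρ e * ρ f| := by
  classical
  rw [← List.prod_toFinset ρ hl, ← Finset.prod_pair hfe.symm]
  exact Finset.abs_prod_le_abs_prod_of_subset ρ (by simp [Finset.insert_subset_iff, he, hf])
    (by simpa using hρ)

section

variable {V : Type*} {G : SimpleGraph V}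

lemma SimpleGraph.Walk.two_le_length_s8 {u v : V} (p : G.Walk u v) (hne : u ≠ v)
    (hnadj : ¬ G.Adj u v) : 2 ≤ p.length := by
  have h0 : p.length ≠ 0 := fun h => hne (Walk.eq_of_length_eq_zero h)
  have h1 : p.length ≠ 1 := fun h => hnadj (Walk.adj_of_length_eq_one h)
  omega

lemma SimpleGraph.Walk.IsTrail.exists_adjacent_edge {u v : V} {p : G.Walk u v}
    (hp : p.IsTrail) (hlen : 2 ≤ p.length) {e : Sym2 V} (he : e ∈ p.edges) :
    ∃ f ∈ p.edges, f ≠ e ∧ ∃ w, w ∈ e ∧ w ∈ f := by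
  obtain ⟨i, hi, rfl⟩ := List.getElem_of_mem he
  have := p.length_edges
  have hne {j : ℕ} (hj : j < p.edges.length) (hij : j ≠ i) : p.edges[j] ≠ p.edges[i] :=
    fun h => hij ((hp.edges_nodup.getElem_inj_iff).mp h)
  rcases Nat.lt_or_ge (i + 1) p.edges.length with hlt | hge
  · refine ⟨_, List.getElem_mem hlt, hne hlt (by omega), p.getVert (i + 1), ?_, ?_⟩ <;>
      simp [Walk.getElem_edges]
  · have hj : i - 1 < p.edges.length := by omega
    refine ⟨_, List.getElem_mem hj, hne hj (by omega), p.getVert i, ?_, ?_⟩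
    · simp [Walk.getElem_edges]
    · simp [Walk.getElem_edges, show i - 1 + 1 = i by omega]

lemma SimpleGraph.Connected.exists_adjacent_edge [Fintype V] (hG : G.Connected)
    (hcard : 3 ≤ Fintype.card V) {e : Sym2 V} (he : e ∈ G.edgeSet) :
    ∃ f ∈ G.edgeSet, f ≠ e ∧ ∃ w, w ∈ e ∧ w ∈ f := by
  classical
  induction e using Sym2.ind with
  | _ u v =>
  obtain ⟨w, hw⟩ : ∃ w, w ∉ ({u, v} : Finset V) := by
    by_contra! h
    have := Finset.card_le_card (fun x _ => h x : Finset.univ ⊆ {u, v})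
    have := Finset.card_le_two (a := u) (b := v)
    rw [Finset.card_univ] at *
    omega
  obtain ⟨d, -, hd, hd'⟩ := (hG.preconnected u w).some.exists_boundary_dart
    {u, v} (by simp) (by simpa using hw)
  refine ⟨s(d.fst, d.snd), d.adj, fun h => hd' ?_, d.fst, ?_, Sym2.mem_mk_left _ _⟩
  · have := h ▸ Sym2.mem_mk_right d.fst d.snd
    simpa using this
  · simpa using hd

lemma SimpleGraph.IsAcyclic.not_adj_of_adj_of_adj_s8 (hG : G.IsAcyclic) {a b c : V}
    (hab : G.Adj a b) (hbc : G.Adj b c) : ¬ G.Adj a c := by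
  classical
  exact fun h => hG.cliqueFree le_rfl {a, b, c} (is3Clique_triple_iff.mpr ⟨hab, h, hbc⟩)

lemma SimpleGraph.IsAcyclic.exists_isPath_edges_eq (hG : G.IsAcyclic) {e f : Sym2 V}
    (he : e ∈ G.edgeSet) (hf : f ∈ G.edgeSet) (hfe : f ≠ e) {w : V} (hwe : w ∈ e)
    (hwf : w ∈ f) : ∃ (u v : V) (p : G.Walk u v),
      p.IsPath ∧ u ≠ v ∧ ¬ G.Adj u v ∧ p.edges = [e, f] := by
  obtain ⟨a, rfl⟩ := Sym2.mem_iff_exists.mp hwe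
  obtain ⟨b, rfl⟩ := Sym2.mem_iff_exists.mp hwf
  have hab : a ≠ b := by rintro rfl; exact hfe rfl
  have hwa : G.Adj w a := he
  have hwb : G.Adj w b := hf
  refine ⟨a, b, .cons hwa.symm (.cons hwb .nil), ?_, hab,
    hG.not_adj_of_adj_of_adj_s8 hwa.symm hwb, by simp [Sym2.eq_swap]⟩
  simp [Walk.cons_isPath_iff, hwa.ne', hwb.ne, hab]

def adjCorrSet (G : SimpleGraph V) (ρ : Sym2 V → ℝ) (e : Sym2 V) : Set ℝ :=
  { y : ℝ | ∃ f ∈ G.edgeSet, f ≠ e ∧ (∃ v : V, v ∈ e ∧ v ∈ f) ∧ y = |ρ f| }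

/-- The paper's `ρ_e*`. -/
noncomputable def maxAdjCorr (G : SimpleGraph V) (ρ : Sym2 V → ℝ) (e : Sym2 V) : ℝ :=
  sSup (adjCorrSet G ρ e)

lemma finite_adjCorrSet [Finite V] (ρ : Sym2 V → ℝ) (e : Sym2 V) :
    (adjCorrSet G ρ e).Finite :=
  (G.edgeSet.toFinite.image fun f => |ρ f|).subset fun _ ⟨f, hf, _, _, hy⟩ => ⟨f, hf, hy.symm⟩

lemma abs_le_maxAdjCorr [Finite V] (ρ : Sym2 V → ℝ) {e f : Sym2 V} (hf : f ∈ G.edgeSet)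
    (hfe : f ≠ e) {w : V} (hwe : w ∈ e) (hwf : w ∈ f) : |ρ f| ≤ maxAdjCorr G ρ e :=
  le_csSup (finite_adjCorrSet ρ e).bddAbove ⟨f, hf, hfe, ⟨w, hwe, hwf⟩, rfl⟩

lemma SimpleGraph.Connected.exists_maxAdjCorr_eq [Fintype V] (hG : G.Connected)
    (hcard : 3 ≤ Fintype.card V) (ρ : Sym2 V → ℝ) {e : Sym2 V} (he : e ∈ G.edgeSet) :
    ∃ f ∈ G.edgeSet, f ≠ e ∧ (∃ w, w ∈ e ∧ w ∈ f) ∧ maxAdjCorr G ρ e = |ρ f| := by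
  obtain ⟨f, hf, hfe, hw⟩ := hG.exists_adjacent_edge hcard he
  exact Set.Nonempty.csSup_mem (s := adjCorrSet G ρ e) ⟨_, f, hf, hfe, hw, rfl⟩
    (finite_adjCorrSet ρ e)

lemma Jt_maxAdjCorr_le [Fintype V] (hG : G.Connected) (hcard : 3 ≤ Fintype.card V)
    {ρ : Sym2 V → ℝ} (hρ : ∀ g ∈ G.edgeSet, |ρ g| < 1) {u v : V} {p : G.Walk u v}
    (hp : p.IsPath) (huv : u ≠ v) (hnadj : ¬ G.Adj u v) {e : Sym2 V} (he : e ∈ p.edges)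
    (he₀ : ρ e ≠ 0) : Jt (ρ e) (ρ e * maxAdjCorr G ρ e) ≤ Jt (ρ e) (p.edges.map ρ).prod := by
  have hρp : ∀ g ∈ p.edges, |ρ g| ≤ 1 := fun g hg => (hρ g (p.edges_subset_edgeSet hg)).le
  obtain ⟨f, hf, hfe, w, hwe, hwf⟩ :=
    hp.isTrail.exists_adjacent_edge (p.two_le_length_s8 huv hnadj) he
  have hfm : |ρ f| ≤ maxAdjCorr G ρ e :=
    abs_le_maxAdjCorr ρ (p.edges_subset_edgeSet hf) hfe hwe hwf
  obtain ⟨g, hg, -, -, hgm⟩ := hG.exists_maxAdjCorr_eq hcard ρ (p.edges_subset_edgeSet he)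
  have hm₀ : 0 ≤ maxAdjCorr G ρ e := (abs_nonneg _).trans hfm
  have hm₁ : maxAdjCorr G ρ e < 1 := hgm ▸ hρ g hg
  have hprod : |(p.edges.map ρ).prod| ≤ |ρ e * maxAdjCorr G ρ e| := by
    refine (hp.isTrail.edges_nodup.abs_prod_map_le ρ hρp he hf hfe).trans ?_
    rw [abs_mul, abs_mul, abs_of_nonneg hm₀]
    gcongr
  have he₁ : ρ e ^ 2 < 1 :=
    (sq_lt_one_iff_abs_lt_one _).mpr (hρ e (p.edges_subset_edgeSet he))
  refine Jt_le_Jt_of_sq_le_s8 he₁ ?_ (sq_le_sq.mpr hprod)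
  rw [mul_pow]
  exact mul_lt_of_lt_one_right (pow_pos (abs_pos.mpr he₀) 2 |>.trans_eq (sq_abs _))
    (pow_lt_one₀ hm₀ hm₁ two_ne_zero)

end

/-- The approximate error exponent can be computed in linear time: it is the minimum over
the edges e of J̃(ρ_e, ρ_e·ρ_e*), where ρ_e* is the maximum of |ρ_f| over the edges f
adjacent to e. -/
theorem Ktilde_linear_time {V : Type*} [Fintype V] (hd : 3 ≤ Fintype.card V)
    (G : SimpleGraph V) (hG : G.IsTree) (ρ : Sym2 V → ℝ)
    (hρ : ∀ e ∈ G.edgeSet, ρ e ∈ Set.Ioo (-1 : ℝ) 1 ∧ ρ e ≠ 0) :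
    Ktilde G ρ = sInf { x : ℝ | ∃ e ∈ G.edgeSet,
      x = Jt (ρ e) (ρ e *
        sSup { y : ℝ | ∃ f ∈ G.edgeSet, f ≠ e ∧ (∃ v : V, v ∈ e ∧ v ∈ f) ∧ y = |ρ f| }) } := by
  have hρ₁ : ∀ g ∈ G.edgeSet, |ρ g| < 1 := fun g hg => abs_lt.mpr (hρ g hg).1
  refine csInf_eq_csInf_of_forall_exists_le ?_ ?_
  · rintro _ ⟨u, v, p, hp, huv, hnadj, e, he, rfl⟩
    have heG := p.edges_subset_edgeSet he
    exact ⟨_, ⟨e, heG, rfl⟩, Jt_maxAdjCorr_le hG.connected hd hρ₁ hp huv hnadj he (hρ e heG).2⟩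
  · rintro _ ⟨e, he, rfl⟩
    obtain ⟨f, hf, hfe, ⟨w, hwe, hwf⟩, hmax⟩ := hG.connected.exists_maxAdjCorr_eq hd ρ he
    obtain ⟨u, v, p, hp, huv, hnadj, hedges⟩ :=
      hG.isAcyclic.exists_isPath_edges_eq he hf hfe hwe hwf
    refine ⟨_, ⟨u, v, p, hp, huv, hnadj, e, by simp [hedges], rfl⟩, (Jt_congr_right ?_).le⟩
    unfold maxAdjCorr adjCorrSet at hmax
    simp [hedges, hmax, mul_pow]
end

section
/- Let a, b ∈ (−1,1)∖{0} with |a| ≤ ρcrit and |b| ≤ ρcrit, where ρcrit = 0.63055. Then the edge weight satisfies W(a,b) = J̃(min{|a|,|b|}, a·b). -/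
/-!
With the precisions q = (1 - c²)⁻¹ and p = (1 - s²)⁻¹, J̃(s, c) is one eighth of
log (1 + d / q)² / (d (2d + 1)) at the gap d = p - q. For c = x y with 0 < x ≤ y, the gaps
d₁ ≤ d₂ of x and y satisfy d₁ d₂ = q (q - 1). The profile is increasing in d while
4d² + d ≤ 2q, by the bound log t ≤ sinh (log t); this settles d₂ ≤ 0.59. For larger d₂ the
bound y ≤ ρcrit forces q + d₂ ≤ 5/3, so d₁ is small, and elementary bounds on the logarithm put
the two values on either side of 1/8.
-/

open Real

lemma Real.log_le_sub_inv_div_two {t : ℝ} (ht : 1 ≤ t) : log t ≤ (t - t⁻¹) / 2 := by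
  rw [← sinh_log (by linarith)]
  exact self_le_sinh_iff.2 (log_nonneg ht)

lemma Real.log_one_add_div_le {q d : ℝ} (hq : 0 < q) (hd : 0 ≤ d) :
    log (1 + d / q) ≤ d * (2 * q + d) / (2 * q * (q + d)) := by
  have h := log_le_sub_inv_div_two (le_add_of_nonneg_right (div_nonneg hd hq.le))
  convert h using 1
  field_simp
  ring

noncomputable def jtProfile (q d : ℝ) : ℝ := log (1 + d / q) ^ 2 / (d * (2 * d + 1))

lemma Jt_eq_jtProfile {s c : ℝ} (hs : 1 - s ^ 2 ≠ 0) (hc : 1 - c ^ 2 ≠ 0) :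
    Jt s c = jtProfile (1 - c ^ 2)⁻¹ ((1 - s ^ 2)⁻¹ - (1 - c ^ 2)⁻¹) / 8 := by
  have harg : (1 - c ^ 2) / (1 - s ^ 2) = 1 + ((1 - s ^ 2)⁻¹ - (1 - c ^ 2)⁻¹) / (1 - c ^ 2)⁻¹ := by
    field_simp
    ring
  have hden : 2 * (c ^ 4 + c ^ 2) / (1 - c ^ 2) ^ 2 + 2 * (s ^ 4 + s ^ 2) / (1 - s ^ 2) ^ 2
      - 4 * c ^ 2 * (s ^ 2 + 1) / ((1 - c ^ 2) * (1 - s ^ 2))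
      = 2 * (((1 - s ^ 2)⁻¹ - (1 - c ^ 2)⁻¹) * (2 * ((1 - s ^ 2)⁻¹ - (1 - c ^ 2)⁻¹) + 1)) := by
    field_simp
    ring
  rw [Jt, jtProfile, harg, hden]
  generalize log _ = L
  generalize (_ : ℝ) * (2 * _ + 1) = D
  ring

lemma jtProfile_monotoneOn {q r : ℝ} (hq : 0 < q) (hr : 4 * r ^ 2 + r ≤ 2 * q) :
    MonotoneOn (jtProfile q) (Set.Ioc 0 r) := by
  have hderiv : ∀ d, 0 < d → HasDerivAt (jtProfile q)
      ((2 * log (1 + d / q) * (d * (2 * d + 1)) / (q + d) - log (1 + d / q) ^ 2 * (4 * d + 1))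
        / (d * (2 * d + 1)) ^ 2) d := by
    intro d hd
    have hlog : HasDerivAt (fun x ↦ log (1 + x / q)) (1 / (q + d)) d :=
      (((hasDerivAt_id' d).div_const q).const_add 1).log (by positivity) |>.congr_deriv
        (by field_simp)
    have hden : HasDerivAt (fun x ↦ x * (2 * x + 1)) (4 * d + 1) d :=
      (hasDerivAt_id' d).mul (((hasDerivAt_id' d).const_mul 2).add_const 1) |>.congr_deriv
        (by ring)
    exact (hlog.fun_pow 2).div hden (by positivity) |>.congr_deriv (by field_simp; ring)
  refine monotoneOn_of_hasDerivWithinAt_nonneg (convex_Ioc 0 r)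
    (fun d hd ↦ (hderiv d hd.1).continuousAt.continuousWithinAt)
    (fun d hd ↦ (hderiv d (interior_subset hd).1).hasDerivWithinAt) ?_
  rw [interior_Ioc]
  rintro d ⟨hd₀, hdr⟩
  have hL₀ : 0 ≤ log (1 + d / q) := log_nonneg (le_add_of_nonneg_right (by positivity))
  have hL : log (1 + d / q) * (4 * d + 1) ≤ 2 * (d * (2 * d + 1)) / (q + d) :=
    calc log (1 + d / q) * (4 * d + 1) ≤ d * (2 * q + d) / (2 * q * (q + d)) * (4 * d + 1) := by
          gcongr
          exact log_one_add_div_le hq hd₀.le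
      _ ≤ 2 * (d * (2 * d + 1)) / (q + d) := by
          rw [div_mul_eq_mul_div, div_le_div_iff₀ (by positivity) (by positivity)]
          have : 4 * d ^ 2 + d ≤ 2 * q := by nlinarith
          nlinarith [mul_pos hd₀ hq, mul_pos (mul_pos hd₀ hq) (by positivity : 0 < q + d)]
  refine div_nonneg ?_ (sq_nonneg _)
  calc 0 ≤ log (1 + d / q) * (2 * (d * (2 * d + 1)) / (q + d) - log (1 + d / q) * (4 * d + 1)) :=
        mul_nonneg hL₀ (by linarith)
    _ = _ := by ring

lemma jtProfile_le {q d : ℝ} (hq : 1 ≤ q) (hd : 0 < d) : jtProfile q d ≤ d / (2 * d + 1) := by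
  have hL₀ : 0 ≤ log (1 + d / q) := log_nonneg (le_add_of_nonneg_right (by positivity))
  have hL : log (1 + d / q) ≤ d :=
    calc log (1 + d / q) ≤ d / q := by
          linarith [log_le_sub_one_of_pos (by positivity : 0 < 1 + d / q)]
      _ ≤ d := div_le_self hd.le hq
  calc jtProfile q d ≤ d ^ 2 / (d * (2 * d + 1)) := by
        unfold jtProfile; gcongr
    _ = d / (2 * d + 1) := by field_simp

lemma le_jtProfile {q d : ℝ} (hq : 0 < q) (hd : 0 < d) :
    (2 * d / (d + 2 * q)) ^ 2 / (d * (2 * d + 1)) ≤ jtProfile q d := by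
  have hL : 2 * d / (d + 2 * q) ≤ log (1 + d / q) := by
    convert le_log_one_add_of_nonneg (div_nonneg hd.le hq.le) using 1
    field_simp
  unfold jtProfile
  gcongr

lemma jtProfile_le_jtProfile_of_large {q d₁ d₂ : ℝ} (hq : 1 ≤ q) (hd₁ : 0 < d₁)
    (hd₂ : 59 / 100 ≤ d₂) (hsum : q + d₂ ≤ 5 / 3) (hprod : d₁ * d₂ = q * (q - 1)) :
    jtProfile q d₁ ≤ jtProfile q d₂ := by
  have hd₁_le : d₁ ≤ 1 / 6 := by nlinarith
  calc jtProfile q d₁ ≤ d₁ / (2 * d₁ + 1) := jtProfile_le hq hd₁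
    _ ≤ 1 / 8 := by rw [div_le_iff₀ (by positivity)]; linarith
    _ ≤ (2 * d₂ / (d₂ + 2 * q)) ^ 2 / (d₂ * (2 * d₂ + 1)) := by
        have hsq : (d₂ + 2 * q) ^ 2 ≤ (10 / 3 - d₂) ^ 2 :=
          pow_le_pow_left₀ (by positivity) (by linarith) 2
        have hpoly : (2 * d₂ + 1) * (10 / 3 - d₂) ^ 2 ≤ 32 * d₂ := by
          nlinarith [mul_nonneg (by linarith : 0 ≤ d₂ - 59 / 100) (by linarith : 0 ≤ 2 / 3 - d₂)]
        rw [div_pow, div_div, le_div_iff₀ (by positivity)]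
        nlinarith [mul_le_mul_of_nonneg_left hsq (by positivity : 0 ≤ d₂ * (2 * d₂ + 1))]
    _ ≤ jtProfile q d₂ := le_jtProfile (by linarith) (by linarith)

lemma jtProfile_le_jtProfile {q d₁ d₂ : ℝ} (hq : 1 ≤ q) (hd₁ : 0 < d₁) (h₁₂ : d₁ ≤ d₂)
    (hsum : q + d₂ ≤ 5 / 3) (hprod : d₁ * d₂ = q * (q - 1)) :
    jtProfile q d₁ ≤ jtProfile q d₂ := by
  rcases le_or_gt d₂ (59 / 100) with hsmall | hlarge
  · exact jtProfile_monotoneOn (by linarith) (by linarith) ⟨hd₁, h₁₂.trans hsmall⟩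
      ⟨hd₁.trans_le h₁₂, hsmall⟩ h₁₂
  · exact jtProfile_le_jtProfile_of_large hq hd₁ hlarge.le hsum hprod

lemma Jt_le_Jt_mul {x y : ℝ} (hx : 0 < x) (hxy : x ≤ y) (hy : y ≤ 0.63055) :
    Jt x (x * y) ≤ Jt y (x * y) := by
  have hy₀ : 0 < y := hx.trans_le hxy
  have hy₂ : y ^ 2 ≤ 2 / 5 := by nlinarith
  have hx₂ : x ^ 2 ≤ y ^ 2 := by gcongr
  have hxy₂ : (x * y) ^ 2 < x ^ 2 := by
    rw [mul_pow]; exact mul_lt_of_lt_one_right (by positivity) (by linarith)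
  have hxy₀ : 0 < (x * y) ^ 2 := by positivity
  rw [Jt_eq_jtProfile (by linarith) (by linarith), Jt_eq_jtProfile (by linarith) (by linarith)]
  gcongr
  apply jtProfile_le_jtProfile
  · exact one_le_inv₀ (by linarith) |>.2 (by linarith)
  · rw [sub_pos]; exact inv_strictAnti₀ (by linarith) (by linarith)
  · exact sub_le_sub_right (inv_anti₀ (by linarith) (by linarith)) _
  · rw [add_sub_cancel, inv_le_comm₀ (by linarith) (by norm_num)]; linarith
  · have : 1 - x ^ 2 * y ^ 2 ≠ 0 := by rw [← mul_pow]; linarith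
    have : 1 - x ^ 2 ≠ 0 := by linarith
    have : 1 - y ^ 2 ≠ 0 := by linarith
    field_simp
    ring

lemma Jt_abs (a c : ℝ) : Jt a c = Jt |a| |c| := by
  simp only [Jt, sq_abs, (by decide : Even 4).pow_abs]

theorem W_eq_Jt_min_general (a b : ℝ)
    (ha0 : a ≠ 0) (hb0 : b ≠ 0) (hac : |a| ≤ 0.63055) (hbc : |b| ≤ 0.63055) :
    W a b = Jt (min |a| |b|) (a * b) := by
  wlog h : |a| ≤ |b| generalizing a b
  · rw [W, min_comm, mul_comm, min_comm |a|]
    exact this b a hb0 ha0 hbc hac (le_of_not_ge h)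
  rw [W, Jt_abs a, Jt_abs b, Jt_abs (min _ _), abs_mul, min_eq_left h, abs_abs]
  exact min_eq_left (Jt_le_Jt_mul (abs_pos.2 ha0) h hbc)

/-- If |a|, |b| ≤ ρcrit = 0.63055, the edge weight satisfies
W(a,b) = J̃(min{|a|,|b|}, a·b). -/
theorem W_eq_Jt_min (a b : ℝ) (ha : a ∈ Set.Ioo (-1 : ℝ) 1) (hb : b ∈ Set.Ioo (-1 : ℝ) 1)
    (ha0 : a ≠ 0) (hb0 : b ≠ 0) (hac : |a| ≤ 0.63055) (hbc : |b| ≤ 0.63055) :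
    W a b = Jt (min |a| |b|) (a * b) :=
  W_eq_Jt_min_general a b ha0 hb0 hac hbc
end

section
/- Let T = (V,E) be a tree on d ≥ 3 vertices with edge correlations ρ : E → (−1,1)∖{0}, and let T′ = (V′,E′) be a subtree of T with at least 3 vertices (V′ ⊆ V, E′ the set of edges of T with both endpoints in V′, and T′ connected), with the edge correlations inherited from T. Then the approximate error exponent for the smaller tree is at least that of the larger tree: K̃(T′) ≥ K̃(T). -/
namespace SimpleGraph

variable {V W : Type*} {G : SimpleGraph V}

theorem IsAcyclic.exists_ne_not_adj (hG : G.IsAcyclic) (hV : 3 ≤ Nat.card V) :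
    ∃ u v : V, u ≠ v ∧ ¬G.Adj u v := by
  have : Finite V := Nat.finite_of_card_ne_zero (by omega)
  have := Fintype.ofFinite V
  rw [← ne_top_iff_exists_not_adj]
  rintro rfl
  rw [Nat.card_eq_fintype_card] at hV
  exact (IsContained.refl (completeGraph V)).not_cliqueFree_card ((hG.cliqueFree le_rfl).mono hV)

def exponentValues (G : SimpleGraph V) (ρ : Sym2 V → ℝ) : Set ℝ :=
  { x : ℝ | ∃ (u v : V) (p : G.Walk u v), p.IsPath ∧ u ≠ v ∧ ¬ G.Adj u v ∧
    ∃ e ∈ p.edges, x = Jt (ρ e) ((p.edges.map ρ).prod) }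

theorem Ktilde_eq_sInf_exponentValues (G : SimpleGraph V) (ρ : Sym2 V → ℝ) :
    Ktilde G ρ = sInf (exponentValues G ρ) :=
  rfl

theorem exponentValues_finite [Finite V] (G : SimpleGraph V) (ρ : Sym2 V → ℝ) :
    (exponentValues G ρ).Finite := by
  classical
  have : Fintype V := Fintype.ofFinite V
  refine (Set.finite_range fun q : (Σ u v : V, G.Path u v) × Sym2 V =>
    Jt (ρ q.2) ((q.1.2.2.1.edges.map ρ).prod)).subset ?_
  rintro x ⟨u, v, p, hp, -, -, e, -, rfl⟩
  exact ⟨(⟨u, v, ⟨p, hp⟩⟩, e), rfl⟩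

theorem exponentValues_nonempty (hG : G.IsAcyclic) (hconn : G.Connected)
    (hV : 3 ≤ Nat.card V) (ρ : Sym2 V → ℝ) : (exponentValues G ρ).Nonempty := by
  obtain ⟨u, v, huv, hnadj⟩ := hG.exists_ne_not_adj hV
  classical
  let p := (hconn.preconnected u v).some.toPath
  have hedges : p.1.edges ≠ [] := Walk.edges_eq_nil.not.mpr (Walk.not_nil_of_ne huv)
  obtain ⟨e, he⟩ := List.exists_mem_of_ne_nil _ hedges
  exact ⟨_, u, v, p.1, p.2, huv, hnadj, e, he, rfl⟩

theorem exponentValues_comap_subset {G' : SimpleGraph W} (f : G' ↪g G) (ρ : Sym2 V → ℝ) :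
    exponentValues G' (ρ ∘ Sym2.map f) ⊆ exponentValues G ρ := by
  rintro x ⟨u, v, p, hp, huv, hnadj, e, he, rfl⟩
  have hedges : (p.map f.toHom).edges = p.edges.map (Sym2.map f) := Walk.edges_map _ _
  refine ⟨f u, f v, p.map f.toHom, hp.map f.injective,
    f.injective.ne huv, f.map_adj_iff.not.mpr hnadj, Sym2.map f e, ?_, ?_⟩
  · exact hedges ▸ List.mem_map_of_mem he
  · rw [hedges, List.map_map]
    rfl

end SimpleGraph

theorem Ktilde_subtree_general {V : Type*} [Fintype V]
    (G : SimpleGraph V) (hG : G.IsTree) (ρ : Sym2 V → ℝ)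
    (s : Set V) (hs : 3 ≤ Nat.card s) (hconn : (G.induce s).Connected) :
    Ktilde G ρ ≤ Ktilde (G.induce s) (fun e => ρ (e.map Subtype.val)) := by
  rw [SimpleGraph.Ktilde_eq_sInf_exponentValues, SimpleGraph.Ktilde_eq_sInf_exponentValues]
  exact csInf_le_csInf (SimpleGraph.exponentValues_finite G ρ).bddBelow
    (SimpleGraph.exponentValues_nonempty (hG.isAcyclic.induce s) hconn hs _)
    (SimpleGraph.exponentValues_comap_subset (SimpleGraph.Embedding.induce s) ρ)

/-- The approximate error exponent of a (connected, induced) subtree on at least 3 vertices,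
with inherited edge correlations, is at least that of the full tree. -/
theorem Ktilde_subtree {V : Type*} [Fintype V] (hd : 3 ≤ Fintype.card V)
    (G : SimpleGraph V) (hG : G.IsTree) (ρ : Sym2 V → ℝ)
    (hρ : ∀ e ∈ G.edgeSet, ρ e ∈ Set.Ioo (-1 : ℝ) 1 ∧ ρ e ≠ 0)
    (s : Set V) (hs : 3 ≤ Nat.card s) (hconn : (G.induce s).Connected) :
    Ktilde G ρ ≤ Ktilde (G.induce s) (fun e => ρ (e.map Subtype.val)) :=
  Ktilde_subtree_general G hG ρ s hs hconn
end

section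
/- Let T = (V,E) be a tree on d ≥ 3 vertices with edge correlations ρ : E → (−1,1)∖{0}, and let ρ_new ∈ (−1,1)∖{0} satisfy |ρ_new| < |ρ_e| for every e ∈ E. For a vertex v ∈ V, let T_v denote the tree obtained from T by attaching one new leaf vertex to v by an edge with correlation ρ_new. For v ∈ V set m(v) := max{|ρ_e| : e ∈ E, e contains v}. Then for all u, v ∈ V, if m(u) ≤ m(v) then K̃(T_u) ≥ K̃(T_v). Consequently, the loss K̃(T) − K̃(T_v) is minimized over v ∈ V at any vertex minimizing m(v), and maximized at any vertex maximizing m(v). -/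
/-- Attach a new leaf (the vertex `none`) to the vertex `v` of `G`. -/
def attachLeaf {V : Type*} (G : SimpleGraph V) (v : V) : SimpleGraph (Option V) where
  Adj x y := (∃ a b, x = some a ∧ y = some b ∧ G.Adj a b)
    ∨ (x = some v ∧ y = none) ∨ (x = none ∧ y = some v)
  symm := by
    constructor
    rintro x y (⟨a, b, rfl, rfl, hab⟩ | ⟨rfl, rfl⟩ | ⟨rfl, rfl⟩)
    · exact Or.inl ⟨b, a, rfl, rfl, hab.symm⟩
    · exact Or.inr (Or.inr ⟨rfl, rfl⟩)
    · exact Or.inr (Or.inl ⟨rfl, rfl⟩)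
  loopless := by
    constructor
    rintro x (⟨a, b, rfl, h, hab⟩ | ⟨rfl, h⟩ | ⟨h, h'⟩)
    · obtain rfl := Option.some.inj h
      exact G.loopless.irrefl a hab
    · exact Option.noConfusion rfl (heq_of_eq h)
    · exact Option.noConfusion rfl (heq_of_eq (h ▸ h'))

/-- Edge correlations on the extended tree: old edges keep their correlation, and the new
edge (any pair involving `none`) carries ρnew. -/
noncomputable def extendRho {V : Type*} (ρ : Sym2 V → ℝ) (ρnew : ℝ) :
    Sym2 (Option V) → ℝ :=
  Sym2.lift ⟨fun x y => match x, y with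
    | some a, some b => ρ s(a, b)
    | _, _ => ρnew, by
    intro x y
    match x, y with
    | some a, some b => exact congrArg ρ Sym2.eq_swap
    | some a, none => rfl
    | none, some b => rfl
    | none, none => rfl⟩

/-- m(v): the maximum of |ρ_e| over edges e containing the vertex v. -/
noncomputable def mdeg {V : Type*} (G : SimpleGraph V) (ρ : Sym2 V → ℝ) (v : V) : ℝ :=
  sSup { y : ℝ | ∃ e ∈ G.edgeSet, v ∈ e ∧ y = |ρ e| }

/-!
Every crossover rate of `T_u` is dominated by one of `T_v`. A path between two old vertices
avoids the new leaf and survives unchanged. A path starting at the leaf runs through `u`, so its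
correlation is `ρnew * r` with `|r|` at most the first factor `|ρ_e| ≤ m(u) ≤ m(v)`. In the
coordinates `1/(1 - ρ²)`, concavity of `log` shows that `J̃(a, b)` decreases as `|b|` grows
towards `|a|`. Hence the rate at the new edge is beaten by the two-edge path from the leaf through
`v` along an edge realising `m(v)`, and the rate at an old edge `e` is beaten by a two-edge induced
path of `T` ending in `e`, which exists because `T` is a tree on at least three vertices.
-/

open Real SimpleGraph

/-- J̃ in the coordinates `X = 1/(1 - a²)`, `W = 1/(1 - b²)`, see `Jt_eq_JtInv`. -/
noncomputable def JtInv (X W : ℝ) : ℝ :=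
  ((1 / 2) * (log X - log W)) ^ 2 / (4 * (X - W) ^ 2 + 2 * (X - W))

lemma Jt_eq_JtInv {a b : ℝ} (ha : |a| < 1) (hb : |b| < 1) :
    Jt a b = JtInv (1 - a ^ 2)⁻¹ (1 - b ^ 2)⁻¹ := by
  have ha' : 1 - a ^ 2 ≠ 0 := (sub_pos.mpr (sq_lt_one_iff_abs_lt_one a |>.mpr ha)).ne'
  have hb' : 1 - b ^ 2 ≠ 0 := (sub_pos.mpr (sq_lt_one_iff_abs_lt_one b |>.mpr hb)).ne'
  unfold Jt JtInv
  rw [Real.log_inv, Real.log_inv, Real.log_div hb' ha']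
  congr 1
  · ring
  · field_simp
    ring

lemma JtInv_nonneg {X W : ℝ} (h : W ≤ X) : 0 ≤ JtInv X W := by
  have : 0 ≤ X - W := sub_nonneg.mpr h
  unfold JtInv
  positivity

lemma log_slope_anti {W₁ W₂ X : ℝ} (h0 : 0 < W₁) (h12 : W₁ ≤ W₂) (h2X : W₂ < X) :
    (log X - log W₂) / (X - W₂) ≤ (log X - log W₁) / (X - W₁) := by
  have key := strictConcaveOn_log_Ioi.concaveOn.neg.secant_mono (a := X) (x := W₁) (y := W₂)
    (Set.mem_Ioi.mpr (by linarith)) h0 (Set.mem_Ioi.mpr (by linarith)) (by linarith) (by linarith)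
    h12
  simp only [Pi.neg_apply, neg_sub_neg] at key
  rwa [← neg_sub X W₁, ← neg_sub X W₂, div_neg, div_neg, neg_le_neg_iff] at key

/-- As `W` increases towards `X`, the secant slope `(log X - log W)/(X - W)` of the concave `log`
decreases and so does `X - W`; `JtInv X W` is a product of increasing functions of both. -/
lemma JtInv_anti {W₁ W₂ X : ℝ} (h0 : 0 < W₁) (h12 : W₁ ≤ W₂) (h2X : W₂ < X) :
    JtInv X W₂ ≤ JtInv X W₁ := by
  set D₁ := log X - log W₁
  set D₂ := log X - log W₂
  set t₁ := X - W₁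
  set t₂ := X - W₂
  have ht₂ : 0 < t₂ := sub_pos.mpr h2X
  have ht₁ : 0 < t₁ := by linarith
  have hD₂ : 0 ≤ D₂ := sub_nonneg.mpr (log_le_log (by linarith) h2X.le)
  have hD : D₂ ≤ D₁ := sub_le_sub_left (log_le_log h0 h12) _
  have hslope : D₂ * t₁ ≤ D₁ * t₂ := (div_le_div_iff₀ ht₂ ht₁).mp (log_slope_anti h0 h12 h2X)
  have hsq : (D₂ * t₁) ^ 2 ≤ (D₁ * t₂) ^ 2 := pow_le_pow_left₀ (mul_nonneg hD₂ ht₁.le) hslope 2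
  have hlin : D₂ ^ 2 * t₁ ≤ D₁ ^ 2 * t₂ := by
    calc D₂ ^ 2 * t₁ = D₂ * (D₂ * t₁) := by ring
      _ ≤ D₂ * (D₁ * t₂) := mul_le_mul_of_nonneg_left hslope hD₂
      _ ≤ D₁ * (D₁ * t₂) := mul_le_mul_of_nonneg_right hD (mul_nonneg (hD₂.trans hD) ht₂.le)
      _ = D₁ ^ 2 * t₂ := by ring
  unfold JtInv
  rw [div_le_div_iff₀ (by nlinarith) (by nlinarith)]
  linear_combination hsq + hlin / 2

lemma Jt_nonneg {a b : ℝ} (hba : |b| ≤ |a|) (ha : |a| < 1) : 0 ≤ Jt a b := by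
  rw [Jt_eq_JtInv ha (hba.trans_lt ha)]
  apply JtInv_nonneg
  apply inv_anti₀ (sub_pos.mpr ((sq_lt_one_iff_abs_lt_one a).mpr ha))
  exact sub_le_sub_left (sq_le_sq.mpr hba) 1

lemma Jt_le_Jt {a b₁ b₂ : ℝ} (h₁₂ : |b₁| ≤ |b₂|) (h₂ : |b₂| < |a|) (ha : |a| < 1) :
    Jt a b₂ ≤ Jt a b₁ := by
  have hb₂ : |b₂| < 1 := h₂.trans ha
  rw [Jt_eq_JtInv ha hb₂, Jt_eq_JtInv ha (h₁₂.trans_lt hb₂)]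
  have h1b₂ : 0 < 1 - b₂ ^ 2 := sub_pos.mpr ((sq_lt_one_iff_abs_lt_one b₂).mpr hb₂)
  have h1a : 0 < 1 - a ^ 2 := sub_pos.mpr ((sq_lt_one_iff_abs_lt_one a).mpr ha)
  apply JtInv_anti
  · have : 0 < 1 - b₁ ^ 2 := by nlinarith [sq_le_sq.mpr h₁₂]
    positivity
  · exact inv_anti₀ h1b₂ (sub_le_sub_left (sq_le_sq.mpr h₁₂) 1)
  · exact inv_strictAnti₀ h1a (sub_lt_sub_left (sq_lt_sq.mpr h₂) 1)

lemma abs_prod_map_le_one {α : Type*} (f : α → ℝ) {l : List α} (h : ∀ x ∈ l, |f x| ≤ 1) :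
    |(l.map f).prod| ≤ 1 := by
  induction l with
  | nil => simp
  | cons a t ih =>
    simp only [List.forall_mem_cons] at h
    simpa only [List.map_cons, List.prod_cons, abs_mul] using
      mul_le_one₀ h.1 (abs_nonneg _) (ih h.2)

lemma abs_prod_map_le_of_mem {α : Type*} [DecidableEq α] (f : α → ℝ) {l : List α}
    (h : ∀ x ∈ l, |f x| ≤ 1) {a : α} (ha : a ∈ l) : |(l.map f).prod| ≤ |f a| := by
  rw [← List.prod_map_erase f ha, abs_mul]
  exact mul_le_of_le_one_right (abs_nonneg _)
    (abs_prod_map_le_one f fun x hx => h x (List.mem_of_mem_erase hx))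

section Mdeg

variable {V : Type*} [Finite V] {G : SimpleGraph V} (ρ : Sym2 V → ℝ)

lemma finite_abs_incident (v : V) : { y : ℝ | ∃ e ∈ G.edgeSet, v ∈ e ∧ y = |ρ e| }.Finite :=
  (Set.finite_range fun e => |ρ e|).subset fun _ ⟨e, _, _, he⟩ => ⟨e, he.symm⟩

lemma abs_le_mdeg {e : Sym2 V} (he : e ∈ G.edgeSet) {v : V} (hv : v ∈ e) :
    |ρ e| ≤ mdeg G ρ v :=
  le_csSup (finite_abs_incident ρ v).bddAbove ⟨e, he, hv, rfl⟩

lemma exists_adj_mdeg_eq {v w : V} (hvw : G.Adj v w) :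
    ∃ w', G.Adj v w' ∧ mdeg G ρ v = |ρ s(v, w')| := by
  obtain ⟨e, he, hve, hmax⟩ : mdeg G ρ v ∈ { y : ℝ | ∃ e ∈ G.edgeSet, v ∈ e ∧ y = |ρ e| } :=
    Set.Nonempty.csSup_mem ⟨_, s(v, w), hvw, Sym2.mem_mk_left v w, rfl⟩ (finite_abs_incident ρ v)
  rw [← Sym2.other_spec hve] at he hmax
  exact ⟨_, he, hmax⟩

end Mdeg

lemma SimpleGraph.IsAcyclic.not_adj_of_adj_adj {V : Type*} {G : SimpleGraph V}
    (hG : G.IsAcyclic) {x y z : V} (hxy : G.Adj x y) (hyz : G.Adj y z) : ¬ G.Adj x z := by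
  classical
  exact fun h => hG.cliqueFree le_rfl {x, y, z} (is3Clique_triple_iff.mpr ⟨hxy, h, hyz⟩)

lemma SimpleGraph.IsTree.exists_adj_adj_not_adj {V : Type*} [Fintype V] {G : SimpleGraph V}
    (hG : G.IsTree) (hcard : 3 ≤ Fintype.card V) {a b : V} (hab : G.Adj a b) :
    ∃ z w₁ w₂, G.Adj z w₁ ∧ G.Adj w₁ w₂ ∧ z ≠ w₂ ∧ ¬ G.Adj z w₂ ∧ s(w₁, w₂) = s(a, b) := by
  classical
  obtain ⟨z₀, -, hz₀⟩ := Finset.exists_mem_notMem_of_card_lt_card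
    (s := {a, b}) (t := Finset.univ) ((Finset.card_le_two).trans_lt hcard)
  obtain ⟨p⟩ := hG.connected.preconnected a z₀
  obtain ⟨d, -, hd₁, hd₂⟩ := p.exists_boundary_dart {a, b} (by simp) (by simpa using hz₀)
  simp only [Set.mem_insert_iff, Set.mem_singleton_iff, not_or] at hd₁ hd₂
  have hflank {w₁ w₂ : V} (h : G.Adj w₁ w₂) (hw : d.fst = w₁) (hd : d.snd ≠ w₂) :
      ∃ z, G.Adj z w₁ ∧ G.Adj w₁ w₂ ∧ z ≠ w₂ ∧ ¬ G.Adj z w₂ :=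
    ⟨d.snd, hw ▸ d.adj.symm, h, hd, hG.isAcyclic.not_adj_of_adj_adj (hw ▸ d.adj.symm) h⟩
  rcases hd₁ with h | h
  · obtain ⟨z, hz⟩ := hflank hab h hd₂.2
    exact ⟨z, a, b, hz.1, hz.2.1, hz.2.2.1, hz.2.2.2, rfl⟩
  · obtain ⟨z, hz⟩ := hflank hab.symm h hd₂.1
    exact ⟨z, b, a, hz.1, hz.2.1, hz.2.2.1, hz.2.2.2, Sym2.eq_swap⟩

section AttachLeaf

variable {V : Type*} {G : SimpleGraph V} {c : V}

@[simp] lemma attachLeaf_adj_some_some {a b : V} :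
    (attachLeaf G c).Adj (some a) (some b) ↔ G.Adj a b := by
  simp [attachLeaf]

@[simp] lemma attachLeaf_adj_none_left {x : Option V} :
    (attachLeaf G c).Adj none x ↔ x = some c := by
  simp [attachLeaf]

@[simp] lemma attachLeaf_adj_none_right {x : Option V} :
    (attachLeaf G c).Adj x none ↔ x = some c := by
  simp [attachLeaf]

@[simp] lemma map_some_mem_edgeSet_attachLeaf {e : Sym2 V} :
    e.map some ∈ (attachLeaf G c).edgeSet ↔ e ∈ G.edgeSet := by
  induction e using Sym2.ind
  simp

lemma mem_edgeSet_attachLeaf {e : Sym2 (Option V)} :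
    e ∈ (attachLeaf G c).edgeSet ↔ (∃ e₀ ∈ G.edgeSet, e₀.map some = e) ∨ e = s(none, some c) := by
  induction e using Sym2.ind with
  | _ x y =>
    cases x <;> cases y
    case some.some a b =>
      simp only [mem_edgeSet, attachLeaf_adj_some_some, eq_comm, Sym2.exists, Sym2.map_mk,
        Sym2.eq, Sym2.rel_iff', Prod.mk.injEq, Option.some.injEq, Prod.swap_prod_mk, reduceCtorEq,
        false_and, or_self, or_false]
      exact ⟨fun h => ⟨_, _, h, .inl ⟨rfl, rfl⟩⟩,
        by rintro ⟨_, _, h, ⟨rfl, rfl⟩ | ⟨rfl, rfl⟩⟩ <;> [exact h; exact h.symm]⟩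
    all_goals simp [Sym2.exists, eq_comm]

variable {ρ : Sym2 V → ℝ} {ρnew : ℝ}

@[simp] lemma extendRho_map_some (e : Sym2 V) : extendRho ρ ρnew (e.map some) = ρ e := by
  induction e using Sym2.ind
  rfl

@[simp] lemma extendRho_some_some (a b : V) : extendRho ρ ρnew s(some a, some b) = ρ s(a, b) :=
  rfl

@[simp] lemma extendRho_none_left (x : Option V) : extendRho ρ ρnew s(none, x) = ρnew := by
  cases x <;> rfl

/-- The new leaf has a single neighbour, so a path cannot pass through it. -/
lemma none_notMem_support_of_isPath {x y : Option V} {p : (attachLeaf G c).Walk x y}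
    (hp : p.IsPath) (hx : x ≠ none) (hy : y ≠ none) : none ∉ p.support := by
  induction p with
  | nil => simpa using hx.symm
  | @cons x v' y h p ih =>
    rw [Walk.cons_isPath_iff] at hp
    rw [Walk.support_cons, List.mem_cons, not_or]
    refine ⟨hx.symm, ?_⟩
    cases v' with
    | some => exact ih hp.1 (Option.some_ne_none _) hy
    | none =>
      cases p with
      | nil => exact absurd rfl hy
      | cons h₂ p₂ =>
        rw [attachLeaf_adj_none_right] at h
        rw [attachLeaf_adj_none_left] at h₂
        subst h h₂
        exact absurd (by simp) hp.2

lemma exists_map_some_eq_of_mem_edges {x y : Option V} {p : (attachLeaf G c).Walk x y}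
    (hp : none ∉ p.support) {e : Sym2 (Option V)} (he : e ∈ p.edges) :
    ∃ e₀ ∈ G.edgeSet, e₀.map some = e := by
  refine (mem_edgeSet_attachLeaf.mp (p.edges_subset_edgeSet he)).resolve_right ?_
  rintro rfl
  exact hp (Walk.mem_support_of_mem_edges he (Sym2.mem_mk_left _ _))

lemma abs_extendRho_lt_one (hρ : ∀ e ∈ G.edgeSet, |ρ e| < 1)
    (hnew : |ρnew| < 1) {e : Sym2 (Option V)} (he : e ∈ (attachLeaf G c).edgeSet) :
    |extendRho ρ ρnew e| < 1 := by
  obtain ⟨e₀, he₀, rfl⟩ | rfl := mem_edgeSet_attachLeaf.mp he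
  · simpa using hρ e₀ he₀
  · simpa using hnew

lemma exists_adj_mk_mem_edges {u w : V} {p : (attachLeaf G c).Walk (some u) (some w)}
    (hp : none ∉ p.support) (huw : u ≠ w) :
    ∃ x, G.Adj u x ∧ s(some u, some x) ∈ p.edges := by
  cases p with
  | nil => exact absurd rfl huw
  | @cons _ x _ h p =>
    cases x with
    | none => exact absurd (by simp) hp
    | some x => exact ⟨x, attachLeaf_adj_some_some.mp h, List.mem_cons_self⟩

end AttachLeaf

def crossoverRates {V : Type*} (G : SimpleGraph V) (ρ : Sym2 V → ℝ) : Set ℝ :=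
  { x : ℝ | ∃ (u v : V) (p : G.Walk u v), p.IsPath ∧ u ≠ v ∧ ¬ G.Adj u v ∧
    ∃ e ∈ p.edges, x = Jt (ρ e) ((p.edges.map ρ).prod) }

lemma Ktilde_eq_sInf_crossoverRates {V : Type*} (G : SimpleGraph V) (ρ : Sym2 V → ℝ) :
    Ktilde G ρ = sInf (crossoverRates G ρ) := rfl

section CrossoverRates

variable {V : Type*} {G : SimpleGraph V} {ρ : Sym2 V → ℝ}

lemma nonneg_of_mem_crossoverRates (hρ : ∀ e ∈ G.edgeSet, |ρ e| < 1) {x : ℝ}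
    (hx : x ∈ crossoverRates G ρ) : 0 ≤ x := by
  classical
  obtain ⟨u, v, p, -, -, -, e, he, rfl⟩ := hx
  have hρp : ∀ f ∈ p.edges, |ρ f| < 1 := fun f hf => hρ f (p.edges_subset_edgeSet hf)
  exact Jt_nonneg (abs_prod_map_le_of_mem ρ (fun f hf => (hρp f hf).le) he) (hρp e he)

lemma Jt_mem_crossoverRates_of_adj_adj {x y z : V} (hxy : G.Adj x y) (hyz : G.Adj y z)
    (hxz : x ≠ z) (hnadj : ¬ G.Adj x z) {e : Sym2 V} (he : e ∈ [s(x, y), s(y, z)]) :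
    Jt (ρ e) (ρ s(x, y) * ρ s(y, z)) ∈ crossoverRates G ρ :=
  ⟨x, z, .cons hxy (.cons hyz .nil), by simp [hxy.ne, hyz.ne, hxz], hxz, hnadj, e, he,
    by simp⟩

end CrossoverRates

section CrossoverRatesAttachLeaf

variable {V : Type*} {G : SimpleGraph V}

lemma mem_crossoverRates_attachLeaf_of_isPath {u v a b : V}
    (σ : Sym2 (Option V) → ℝ) {p : (attachLeaf G u).Walk (some a) (some b)} (hp : p.IsPath)
    (hab : a ≠ b) (hnadj : ¬ G.Adj a b) {e : Sym2 (Option V)} (he : e ∈ p.edges) :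
    Jt (σ e) ((p.edges.map σ).prod) ∈ crossoverRates (attachLeaf G v) σ := by
  have hnone := none_notMem_support_of_isPath hp (Option.some_ne_none a) (Option.some_ne_none b)
  have hedges : ∀ f ∈ p.edges, f ∈ (attachLeaf G v).edgeSet := fun f hf => by
    obtain ⟨f₀, hf₀, rfl⟩ := exists_map_some_eq_of_mem_edges hnone hf
    exact map_some_mem_edgeSet_attachLeaf.mpr hf₀
  exact ⟨some a, some b, p.transfer _ hedges, hp.transfer hedges, by simpa using hab,
    by simpa using hnadj, e, by rwa [Walk.edges_transfer], by rw [Walk.edges_transfer]⟩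

lemma crossoverRates_attachLeaf_nonempty {u w : V}
    (huw : G.Adj u w) (σ : Sym2 (Option V) → ℝ) :
    (crossoverRates (attachLeaf G u) σ).Nonempty :=
  ⟨_, Jt_mem_crossoverRates_of_adj_adj (x := none) (attachLeaf_adj_none_left.mpr rfl)
    (attachLeaf_adj_some_some.mpr huw) (by simp) (by simpa using huw.ne')
    (e := s(none, some u)) (by simp)⟩

end CrossoverRatesAttachLeaf

section Domination

variable {V : Type*} [Fintype V] {G : SimpleGraph V} {ρ : Sym2 V → ℝ} {ρnew : ℝ}

lemma exists_le_Jt_of_mem_edgeSet (hG : G.IsTree) (hcard : 3 ≤ Fintype.card V)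
    (hρ1 : ∀ e ∈ G.edgeSet, |ρ e| < 1) (hρ0 : ∀ e ∈ G.edgeSet, ρ e ≠ 0) (c : V)
    {e₀ : Sym2 V} (he₀ : e₀ ∈ G.edgeSet) {β : ℝ} (hβ : ∀ f ∈ G.edgeSet, |β| ≤ |ρ f| * |ρ e₀|) :
    ∃ y ∈ crossoverRates (attachLeaf G c) (extendRho ρ ρnew), y ≤ Jt (ρ e₀) β := by
  induction e₀ using Sym2.ind with
  | _ a b =>
    obtain ⟨z, w₁, w₂, hzw₁, hw₁w₂, hzw₂, hnadj, hw⟩ := hG.exists_adj_adj_not_adj hcard he₀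
    have hmem := Jt_mem_crossoverRates_of_adj_adj (ρ := extendRho ρ ρnew) (G := attachLeaf G c)
      (attachLeaf_adj_some_some.mpr hzw₁) (attachLeaf_adj_some_some.mpr hw₁w₂)
      (by simpa using hzw₂) (by simpa using hnadj) (e := s(some w₁, some w₂)) (by simp)
    simp only [extendRho_some_some, hw] at hmem
    refine ⟨_, hmem, Jt_le_Jt (by rw [abs_mul]; exact hβ _ hzw₁) ?_ (hρ1 _ he₀)⟩
    rw [abs_mul]
    exact mul_lt_of_lt_one_left (abs_pos.mpr (hρ0 _ he₀)) (hρ1 _ hzw₁)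

lemma exists_le_Jt_new_edge (hρ1 : ∀ e ∈ G.edgeSet, |ρ e| < 1) (hnew1 : |ρnew| < 1)
    (hnew0 : ρnew ≠ 0) {v w : V} (hvw : G.Adj v w) {r : ℝ} (hr : |r| ≤ mdeg G ρ v) :
    ∃ y ∈ crossoverRates (attachLeaf G v) (extendRho ρ ρnew), y ≤ Jt ρnew (ρnew * r) := by
  obtain ⟨w', hvw', hmax⟩ := exists_adj_mdeg_eq ρ hvw
  have hmem := Jt_mem_crossoverRates_of_adj_adj (ρ := extendRho ρ ρnew) (x := none)
    (attachLeaf_adj_none_left.mpr rfl) (attachLeaf_adj_some_some.mpr hvw') (by simp)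
    (by simpa using hvw'.ne') (e := s(none, some v)) (by simp)
  simp only [extendRho_some_some, extendRho_none_left] at hmem
  refine ⟨_, hmem, Jt_le_Jt ?_ ?_ hnew1⟩
  · rw [abs_mul, abs_mul]
    exact mul_le_mul_of_nonneg_left (hr.trans hmax.le) (abs_nonneg _)
  · rw [abs_mul]
    exact mul_lt_of_lt_one_right (abs_pos.mpr hnew0) (hρ1 _ hvw')

lemma exists_le_of_isPath_from_leaf (hG : G.IsTree) (hcard : 3 ≤ Fintype.card V)
    (hρ1 : ∀ e ∈ G.edgeSet, |ρ e| < 1) (hρ0 : ∀ e ∈ G.edgeSet, ρ e ≠ 0)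
    (hnew1 : |ρnew| < 1) (hnew0 : ρnew ≠ 0) (hless : ∀ e ∈ G.edgeSet, |ρnew| < |ρ e|)
    {u v w : V} (huv : mdeg G ρ u ≤ mdeg G ρ v) {p : (attachLeaf G u).Walk none (some w)}
    (hp : p.IsPath) (hwu : w ≠ u) {e : Sym2 (Option V)} (he : e ∈ p.edges) :
    ∃ y ∈ crossoverRates (attachLeaf G v) (extendRho ρ ρnew),
      y ≤ Jt (extendRho ρ ρnew e) ((p.edges.map (extendRho ρ ρnew)).prod) := by
  classical
  cases p with
  | @cons _ x _ h p =>
    obtain rfl := attachLeaf_adj_none_left.mp h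
    obtain ⟨hp, hnone⟩ := (Walk.cons_isPath_iff _ _).mp hp
    have hold_edges := fun f (hf : f ∈ p.edges) => exists_map_some_eq_of_mem_edges hnone hf
    have hprod : ∀ f ∈ p.edges, |(p.edges.map (extendRho ρ ρnew)).prod| ≤ |extendRho ρ ρnew f| :=
      fun f hf => abs_prod_map_le_of_mem _ (fun f' hf' => by
        obtain ⟨f₀, hf₀, rfl⟩ := hold_edges f' hf'
        simpa using (hρ1 f₀ hf₀).le) hf
    simp only [Walk.edges_cons, List.map_cons, List.prod_cons, extendRho_none_left]
    rw [Walk.edges_cons] at he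
    rcases List.mem_cons.mp he with rfl | he
    · obtain ⟨x, hux, hx⟩ := exists_adj_mk_mem_edges hnone hwu.symm
      have : Nontrivial V := Fintype.one_lt_card_iff_nontrivial.mp (by omega)
      obtain ⟨w', hvw'⟩ := hG.connected.preconnected.exists_adj_of_nontrivial v
      rw [extendRho_none_left]
      refine exists_le_Jt_new_edge hρ1 hnew1 hnew0 hvw' ((hprod _ hx).trans ?_)
      rw [extendRho_some_some]
      exact (abs_le_mdeg ρ hux (Sym2.mem_mk_left u x)).trans huv
    · obtain ⟨e₀, he₀, rfl⟩ := hold_edges e he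
      rw [extendRho_map_some]
      refine exists_le_Jt_of_mem_edgeSet hG hcard hρ1 hρ0 v he₀ fun f hf => ?_
      rw [abs_mul]
      simpa using mul_le_mul (hless f hf).le (hprod _ he) (abs_nonneg _) (abs_nonneg _)

lemma exists_le_of_mem_crossoverRates_attachLeaf (hG : G.IsTree) (hcard : 3 ≤ Fintype.card V)
    (hρ1 : ∀ e ∈ G.edgeSet, |ρ e| < 1) (hρ0 : ∀ e ∈ G.edgeSet, ρ e ≠ 0)
    (hnew1 : |ρnew| < 1) (hnew0 : ρnew ≠ 0) (hless : ∀ e ∈ G.edgeSet, |ρnew| < |ρ e|)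
    {u v : V} (huv : mdeg G ρ u ≤ mdeg G ρ v) {x : ℝ}
    (hx : x ∈ crossoverRates (attachLeaf G u) (extendRho ρ ρnew)) :
    ∃ y ∈ crossoverRates (attachLeaf G v) (extendRho ρ ρnew), y ≤ x := by
  obtain ⟨a, b, p, hp, hab, hnadj, e, he, rfl⟩ := hx
  cases a with
  | none =>
    cases b with
    | none => exact absurd rfl hab
    | some b =>
      exact exists_le_of_isPath_from_leaf hG hcard hρ1 hρ0 hnew1 hnew0 hless huv hp
        (by simpa using hnadj) he
  | some a =>
    cases b with
    | none =>
      simpa [Walk.edges_reverse, List.prod_reverse] using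
        exists_le_of_isPath_from_leaf hG hcard hρ1 hρ0 hnew1 hnew0 hless huv hp.reverse
          (by simpa using hnadj) (p.edges_reverse ▸ List.mem_reverse.mpr he)
    | some b =>
      exact ⟨_, mem_crossoverRates_attachLeaf_of_isPath _ hp (by simpa using hab)
        (by simpa using hnadj) he, le_rfl⟩

lemma Ktilde_attachLeaf_anti (hG : G.IsTree) (hcard : 3 ≤ Fintype.card V)
    (hρ1 : ∀ e ∈ G.edgeSet, |ρ e| < 1) (hρ0 : ∀ e ∈ G.edgeSet, ρ e ≠ 0)
    (hnew1 : |ρnew| < 1) (hnew0 : ρnew ≠ 0) (hless : ∀ e ∈ G.edgeSet, |ρnew| < |ρ e|)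
    {u v : V} (huv : mdeg G ρ u ≤ mdeg G ρ v) :
    Ktilde (attachLeaf G v) (extendRho ρ ρnew) ≤ Ktilde (attachLeaf G u) (extendRho ρ ρnew) := by
  have : Nontrivial V := Fintype.one_lt_card_iff_nontrivial.mp (by omega)
  obtain ⟨w, huw⟩ := hG.connected.preconnected.exists_adj_of_nontrivial u
  have hbdd : BddBelow (crossoverRates (attachLeaf G v) (extendRho ρ ρnew)) :=
    ⟨0, fun _ hy => nonneg_of_mem_crossoverRates (fun _ he => abs_extendRho_lt_one hρ1 hnew1 he) hy⟩
  rw [Ktilde_eq_sInf_crossoverRates, Ktilde_eq_sInf_crossoverRates]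
  refine le_csInf (crossoverRates_attachLeaf_nonempty huw _) fun x hx => ?_
  obtain ⟨y, hy, hyx⟩ :=
    exists_le_of_mem_crossoverRates_attachLeaf hG hcard hρ1 hρ0 hnew1 hnew0 hless huv hx
  exact (csInf_le hbdd hy).trans hyx

end Domination

/-- Attaching a new leaf with correlation ρnew (smaller in magnitude than all existing edge
correlations) to a vertex v of a tree: the resulting exponent K̃(T_v) is antitone in
m(v) = max{|ρ_e| : e contains v}. Consequently the loss K̃(T) − K̃(T_v) is minimized at any
vertex minimizing m, and maximized at any vertex maximizing m. -/
theorem attach_leaf_extremal {V : Type*} [Fintype V] (hd : 3 ≤ Fintype.card V)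
    (G : SimpleGraph V) (hG : G.IsTree) (ρ : Sym2 V → ℝ)
    (hρ : ∀ e ∈ G.edgeSet, ρ e ∈ Set.Ioo (-1 : ℝ) 1 ∧ ρ e ≠ 0)
    (ρnew : ℝ) (hnew : ρnew ∈ Set.Ioo (-1 : ℝ) 1) (hnew0 : ρnew ≠ 0)
    (hless : ∀ e ∈ G.edgeSet, |ρnew| < |ρ e|) :
    (∀ u v : V, mdeg G ρ u ≤ mdeg G ρ v →
      Ktilde (attachLeaf G v) (extendRho ρ ρnew) ≤
        Ktilde (attachLeaf G u) (extendRho ρ ρnew))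
    ∧ (∀ v₀ : V, (∀ w : V, mdeg G ρ v₀ ≤ mdeg G ρ w) → ∀ v : V,
        Ktilde G ρ - Ktilde (attachLeaf G v₀) (extendRho ρ ρnew)
          ≤ Ktilde G ρ - Ktilde (attachLeaf G v) (extendRho ρ ρnew))
    ∧ (∀ v₁ : V, (∀ w : V, mdeg G ρ w ≤ mdeg G ρ v₁) → ∀ v : V,
        Ktilde G ρ - Ktilde (attachLeaf G v) (extendRho ρ ρnew)
          ≤ Ktilde G ρ - Ktilde (attachLeaf G v₁) (extendRho ρ ρnew)) := by
  have anti : ∀ u v : V, mdeg G ρ u ≤ mdeg G ρ v →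
      Ktilde (attachLeaf G v) (extendRho ρ ρnew) ≤ Ktilde (attachLeaf G u) (extendRho ρ ρnew) :=
    fun _ _ => Ktilde_attachLeaf_anti hG hd (fun e he => abs_lt.mpr (hρ e he).1)
      (fun e he => (hρ e he).2) (abs_lt.mpr hnew) hnew0 hless
  exact ⟨anti, fun v₀ hv₀ v => sub_le_sub_left (anti v₀ v (hv₀ v)) _,
    fun v₁ hv₁ v => sub_le_sub_left (anti v v₁ (hv₁ v)) _⟩
end
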